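/- arXiv:1605.02664 — 11 statements merged into one kernel-verified Lean document; each statement's English description precedes it below -/
import Mathlib

section
/- Let A be a commutative idempotented *-algebra. Then every irreducible unitary representation of A is one-dimensional. -/
local notation "⟪" x ", " y "⟫" => @inner ℂ _ _ x y

/-- An idempotented `*`-algebra: for every finite set `F ⊆ A` there is a self-adjoint
idempotent `e ∈ A` with `e * a * e = a` for all `a ∈ F`. -/
def IsIdempotented (A : Type*) [NonUnitalRing A] [StarRing A] : Prop :=
  ∀ F : Finset A, ∃ e : A, e * e = e ∧ star e = e ∧ ∀ a ∈ F, e * a * e = a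

/-- A unitary representation of an idempotented `*`-algebra `A` on a complex Hilbert space
`V`: condition (U1) is `star_apply`, condition (U2) is `denseSmooth`, and condition (U3)
(boundedness of the action of each element) is built in by using continuous linear maps. -/
structure URep (A : Type*) [NonUnitalRing A] [StarRing A] [Module ℂ A]
    (V : Type*) [NormedAddCommGroup V] [InnerProductSpace ℂ V] where
  ρ : A →ₗ[ℂ] V →L[ℂ] V
  mul_apply : ∀ a b : A, ρ (a * b) = (ρ a).comp (ρ b)
  star_apply : ∀ (a : A) (u v : V), ⟪ρ a u, v⟫ = ⟪u, ρ (star a) v⟫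
  denseSmooth : Dense (↑(Submodule.span ℂ {w : V | ∃ (a : A) (u : V), ρ a u = w}) : Set V)

/-- Irreducibility: `V ≠ 0` and `V` has no closed `A`-submodules other than `⊥` and `⊤`. -/
def URep.Irreducible {A : Type*} [NonUnitalRing A] [StarRing A] [Module ℂ A]
    {V : Type*} [NormedAddCommGroup V] [InnerProductSpace ℂ V] (R : URep A V) : Prop :=
  (∃ v : V, v ≠ 0) ∧
    ∀ W : Submodule ℂ V, IsClosed (W : Set V) →
      (∀ a : A, ∀ v ∈ W, R.ρ a v ∈ W) → W = ⊥ ∨ W = ⊤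

/-- Weak containment: every matrix coefficient of `R` is a limit, uniformly on finite subsets
of `A`, of matrix coefficients of `R'` at unit vectors. -/
def WeaklyContained {A : Type*} [NonUnitalRing A] [StarRing A] [Module ℂ A]
    {V : Type*} [NormedAddCommGroup V] [InnerProductSpace ℂ V]
    {V' : Type*} [NormedAddCommGroup V'] [InnerProductSpace ℂ V']
    (R : URep A V) (R' : URep A V') : Prop :=
  ∀ v : V, ‖v‖ = 1 → ∀ ε : ℝ, 0 < ε → ∀ F : Finset A, ∃ v' : V', ‖v'‖ = 1 ∧
    ∀ a ∈ F, ‖⟪v, R.ρ a v⟫ - ⟪v', R'.ρ a v'⟫‖ < ε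

/-- If `S` commutes with `T` and `star T`, it commutes with every element of the
elemental star algebra generated by `T`. -/
lemma commute_of_mem_elemental {B : Type*} [NormedRing B] [StarRing B] [NormedAlgebra ℂ B]
    [ContinuousStar B] [StarModule ℂ B] {S T : B} (h1 : Commute S T)
    (h2 : Commute S (star T)) {x : B} (hx : x ∈ StarAlgebra.elemental ℂ T) :
    Commute S x := by
  induction hx using StarAlgebra.elemental.induction_on with
  | self => exact h1
  | star_self => exact h2
  | algebraMap r => exact Algebra.commute_algebraMap_right r S
  | add u hu v hv pu pv => exact pu.add_right pv
  | mul u hu v hv pu pv => exact pu.mul_right pv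
  | closure s hs hP v hv =>
    have hcl : IsClosed {y : B | Commute S y} :=
      isClosed_eq (continuous_mul_left S) (continuous_mul_right S)
    exact closure_minimal (fun u hu => hP u hu) hcl hv

/-- A self-adjoint operator commuting with an irreducible representation is a scalar. -/
lemma selfAdjoint_commuting_is_scalar {A : Type*} [NonUnitalRing A] [StarRing A] [Module ℂ A]
    {V : Type*} [NormedAddCommGroup V] [InnerProductSpace ℂ V] [CompleteSpace V]
    (R : URep A V) (hirr : R.Irreducible) (T : V →L[ℂ] V) (hT : IsSelfAdjoint T)
    (hTc : ∀ b : A, Commute (R.ρ b) T) : ∃ c : ℂ, T = c • (1 : V →L[ℂ] V) := by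
  obtain ⟨v0, hv0⟩ := hirr.1
  haveI : Nontrivial V := ⟨v0, 0, hv0⟩
  haveI hnorm : IsStarNormal T := hT.isStarNormal
  -- spectrum is a single point
  have hsub : (spectrum ℂ T).Subsingleton := by
    intro lam hlam mu hmu
    by_contra hne
    set r : ℝ := dist lam mu with hr
    have hrpos : 0 < r := dist_pos.mpr hne
    set f : ℂ → ℂ := fun z => ((max 0 (1 - (2 / r) * dist z lam) : ℝ) : ℂ) with hf
    set g : ℂ → ℂ := fun z => ((max 0 (1 - (2 / r) * dist z mu) : ℝ) : ℂ) with hg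
    have hfcont : Continuous f := by
      exact Complex.continuous_ofReal.comp <| continuous_const.max <|
        continuous_const.sub <| continuous_const.mul (continuous_id.dist continuous_const)
    have hgcont : Continuous g := by
      exact Complex.continuous_ofReal.comp <| continuous_const.max <|
        continuous_const.sub <| continuous_const.mul (continuous_id.dist continuous_const)
    have hfg : ∀ z, g z * f z = 0 := by
      intro z
      have : r / 2 ≤ dist z lam ∨ r / 2 ≤ dist z mu := by
        by_contra h
        push_neg at h
        have := dist_triangle lam z mu
        rw [dist_comm lam z] at this
        linarith [this, h.1, h.2]
      rcases this with h | h
      · have : f z = 0 := by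
          simp only [hf, Complex.ofReal_eq_zero]
          have : (2 / r) * dist z lam ≥ 1 := by
            rw [ge_iff_le, ← div_le_iff₀' (by positivity)]
            calc (1 : ℝ) / (2 / r) = r / 2 := by field_simp
            _ ≤ dist z lam := h
          exact max_eq_left (by linarith)
        rw [this, mul_zero]
      · have : g z = 0 := by
          simp only [hg, Complex.ofReal_eq_zero]
          have : (2 / r) * dist z mu ≥ 1 := by
            rw [ge_iff_le, ← div_le_iff₀' (by positivity)]
            calc (1 : ℝ) / (2 / r) = r / 2 := by field_simp
            _ ≤ dist z mu := h
          exact max_eq_left (by linarith)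
        rw [this, zero_mul]
    set F := cfc f T with hF
    set G := cfc g T with hG
    have hf1 : f lam = 1 := by simp [hf]
    have hg1 : g mu = 1 := by simp [hg]
    have hF0 : F ≠ 0 := by
      intro h
      have : (spectrum ℂ T).EqOn f 0 := by
        apply eqOn_of_cfc_eq_cfc (a := T)
        rw [cfc_zero]; exact h
      have := this hlam
      rw [hf1] at this
      simp at this
    have hG0 : G ≠ 0 := by
      intro h
      have : (spectrum ℂ T).EqOn g 0 := by
        apply eqOn_of_cfc_eq_cfc (a := T)
        rw [cfc_zero]; exact h
      have := this hmu
      rw [hg1] at this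
      simp at this
    have hGF : G * F = 0 := by
      rw [hG, hF, ← cfc_mul g f T hgcont.continuousOn hfcont.continuousOn]
      calc cfc (fun z => g z * f z) T = cfc (0 : ℂ → ℂ) T := cfc_congr (fun z _ => hfg z)
      _ = 0 := cfc_zero ℂ T
    -- F and G lie in the elemental algebra of T, hence commute with the representation
    have hmem : ∀ (h : ℂ → ℂ), Continuous h → cfc h T ∈ StarAlgebra.elemental ℂ T := by
      intro h hc
      rw [cfc_apply h T hnorm hc.continuousOn, cfcHom_eq_of_isStarNormal]
      exact ((continuousFunctionalCalculus T) _).2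
    have hcomF : ∀ b : A, Commute (R.ρ b) F :=
      fun b => commute_of_mem_elemental (hTc b) (by rw [hT.star_eq]; exact hTc b) (hmem f hfcont)
    -- the closure of the range of F is a proper nonzero invariant subspace
    set W : Submodule ℂ V := (LinearMap.range (F : V →ₗ[ℂ] V)).topologicalClosure with hW
    have hWclosed : IsClosed (W : Set V) := Submodule.isClosed_topologicalClosure _
    have hWinv : ∀ a : A, ∀ v ∈ W, R.ρ a v ∈ W := by
      intro a v hv
      have hmapsto : Set.MapsTo (R.ρ a) (LinearMap.range (F : V →ₗ[ℂ] V))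
          (LinearMap.range (F : V →ₗ[ℂ] V)) := by
        rintro _ ⟨u, rfl⟩
        refine ⟨R.ρ a u, ?_⟩
        have := congrFun (congrArg DFunLike.coe (hcomF a)) u
        simpa using this.symm
      exact hmapsto.closure (R.ρ a).continuous hv
    rcases hirr.2 W hWclosed hWinv with h | h
    · obtain ⟨u, hu⟩ : ∃ u, F u ≠ 0 := by
        by_contra hc
        push_neg at hc
        exact hF0 (ContinuousLinearMap.ext hc)
      have : F u ∈ W := Submodule.le_topologicalClosure _ ⟨u, rfl⟩
      rw [h] at this
      exact hu this
    · have hle : (W : Set V) ⊆ (LinearMap.ker (G : V →ₗ[ℂ] V) : Set V) := by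
        apply closure_minimal
        · rintro _ ⟨u, rfl⟩
          have : G (F u) = 0 := by
            have := congrFun (congrArg DFunLike.coe hGF) u
            simpa using this
          simpa using this
        · exact ContinuousLinearMap.isClosed_ker G
      apply hG0
      ext u
      have : u ∈ W := h ▸ Submodule.mem_top
      simpa using hle this
  rcases hsub.eq_empty_or_singleton with hsp | ⟨lam, hsp⟩
  · exact absurd hsp (spectrum.nonempty T).ne_empty
  · refine ⟨lam, ?_⟩
    have hid : T = cfc (fun z : ℂ => z) T := (cfc_id' ℂ T).symm
    rw [hid, cfc_congr (g := fun _ : ℂ => lam) (fun z hz => by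
      rw [hsp] at hz; simpa using hz), cfc_const lam T]
    simp [Algebra.algebraMap_eq_smul_one]

/-- Irreducible unitary representations of a *commutative* idempotented `*`-algebra are
one-dimensional. -/
theorem irreducible_of_commutative_is_one_dimensional
    {A : Type*} [NonUnitalRing A] [StarRing A] [Module ℂ A]
    [IsScalarTower ℂ A A] [SMulCommClass ℂ A A] [StarModule ℂ A]
    (hA : IsIdempotented A) (hcomm : ∀ a b : A, a * b = b * a)
    {V : Type*} [NormedAddCommGroup V] [InnerProductSpace ℂ V] [CompleteSpace V]
    (R : URep A V) (hirr : R.Irreducible) :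
    Module.finrank ℂ V = 1 := by
  obtain ⟨v0, hv0⟩ := hirr.1
  -- the adjoint of ρ a is ρ (star a)
  have hstar : ∀ a : A, star (R.ρ a) = R.ρ (star a) := by
    intro a
    have h : R.ρ a = ContinuousLinearMap.adjoint (R.ρ (star a)) :=
      (ContinuousLinearMap.eq_adjoint_iff (R.ρ a) (R.ρ (star a))).mpr (R.star_apply a)
    rw [ContinuousLinearMap.star_eq_adjoint, h, ContinuousLinearMap.adjoint_adjoint]
  -- operators of the representation commute
  have hc : ∀ a b : A, Commute (R.ρ b) (R.ρ a) := by
    intro a b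
    show R.ρ b * R.ρ a = R.ρ a * R.ρ b
    rw [ContinuousLinearMap.mul_def, ContinuousLinearMap.mul_def, ← R.mul_apply,
      ← R.mul_apply, hcomm]
  -- every operator of the representation is scalar
  have hscal : ∀ a : A, ∃ c : ℂ, R.ρ a = c • (1 : V →L[ℂ] V) := by
    intro a
    set a1 : A := a + star a with ha1
    set a2 : A := Complex.I • (star a - a) with ha2
    have hsa1 : star a1 = a1 := by simp [ha1, add_comm]
    have hsa2 : star a2 = a2 := by
      simp only [ha2, star_smul, star_sub, star_star, Complex.star_def, Complex.conj_I,
        neg_smul, smul_sub]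
      module
    have hT1 : IsSelfAdjoint (R.ρ a1) := by
      rw [IsSelfAdjoint, hstar, hsa1]
    have hT2 : IsSelfAdjoint (R.ρ a2) := by
      rw [IsSelfAdjoint, hstar, hsa2]
    obtain ⟨c1, hc1⟩ := selfAdjoint_commuting_is_scalar R hirr (R.ρ a1) hT1 (fun b => hc a1 b)
    obtain ⟨c2, hc2⟩ := selfAdjoint_commuting_is_scalar R hirr (R.ρ a2) hT2 (fun b => hc a2 b)
    refine ⟨c1 / 2 + Complex.I * c2 / 2, ?_⟩
    have hdecomp : a = ((1 : ℂ)/2) • a1 + (Complex.I/2) • a2 := by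
      simp only [ha1, ha2, smul_smul, smul_sub, smul_add]
      have : (Complex.I / 2) * Complex.I = -(1/2 : ℂ) := by
        rw [div_mul_eq_mul_div, Complex.I_mul_I]; norm_num
      rw [this]
      module
    calc R.ρ a = R.ρ (((1 : ℂ)/2) • a1 + (Complex.I/2) • a2) := by rw [← hdecomp]
    _ = ((1 : ℂ)/2) • R.ρ a1 + (Complex.I/2) • R.ρ a2 := by
        rw [map_add, map_smul, map_smul]
    _ = (c1 / 2 + Complex.I * c2 / 2) • (1 : V →L[ℂ] V) := by
        rw [hc1, hc2, smul_smul, smul_smul, ← add_smul]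
        congr 1
        ring
  -- hence the line through any nonzero vector is invariant and closed, so it is everything
  set W : Submodule ℂ V := Submodule.span ℂ {v0} with hWdef
  haveI : FiniteDimensional ℂ W := by
    apply FiniteDimensional.span_of_finite
    exact Set.finite_singleton v0
  have hWclosed : IsClosed (W : Set V) := Submodule.closed_of_finiteDimensional W
  have hWinv : ∀ a : A, ∀ v ∈ W, R.ρ a v ∈ W := by
    intro a v hv
    obtain ⟨c, hc'⟩ := hscal a
    rw [hc']
    simpa using W.smul_mem c hv
  rcases hirr.2 W hWclosed hWinv with h | h
  · have hmem : v0 ∈ W := Submodule.mem_span_singleton_self v0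
    rw [h] at hmem
    exact absurd ((Submodule.mem_bot ℂ).mp hmem) hv0
  · rw [← finrank_top ℂ V, ← h, hWdef]
    exact finrank_span_singleton hv0
end

section
/- Let A be an idempotented *-algebra and let V and V' be complex Hilbert spaces with left A-module structures satisfying conditions (U1) and (U3) of the definition of a unitary representation (the density condition (U2) is not assumed). If there exists a continuous A-module isomorphism f : V → V' (a bounded bijective A-linear map), then there exists a unitary A-module isomorphism g : V → V' (a bijective A-linear map preserving the inner products). -/
local notation "⟪" x ", " y "⟫" => @inner ℂ _ _ x y

/-- A representation of `A` on a complex Hilbert space satisfying conditions (U1)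
(`star_apply`) and (U3) (boundedness, built in by using continuous linear maps), but not
necessarily the density condition (U2). -/
structure StarRep (A : Type*) [NonUnitalRing A] [StarRing A] [Module ℂ A]
    (V : Type*) [NormedAddCommGroup V] [InnerProductSpace ℂ V] where
  ρ : A →ₗ[ℂ] V →L[ℂ] V
  mul_apply : ∀ a b : A, ρ (a * b) = (ρ a).comp (ρ b)
  star_apply : ∀ (a : A) (u v : V), ⟪ρ a u, v⟫ = ⟪u, ρ (star a) v⟫

open Polynomial in
lemma commute_cfc_aux {B : Type*} [CStarAlgebra B] {a b : B}
    (h : Commute b a) (f : ℝ → ℝ) : Commute b (cfc f a) := by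
  refine cfc_cases (fun x => Commute b x) a f (Commute.zero_right b) fun hf ha' => ?_
  suffices H : ∀ g : C(spectrum ℝ a, ℝ), Commute b (cfcHom ha' g) from H _
  intro g
  have hcont : Continuous (cfcHom ha' (R := ℝ) : C(spectrum ℝ a, ℝ) → B) :=
    (cfcHom_isClosedEmbedding ha').continuous
  let S : Subalgebra ℝ C(spectrum ℝ a, ℝ) :=
    { carrier := {g | Commute b (cfcHom ha' g)}
      mul_mem' := @fun x y hx hy => by
        show Commute b (cfcHom ha' (x * y))
        rw [map_mul]
        exact hx.mul_right hy
      add_mem' := @fun x y hx hy => by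
        show Commute b (cfcHom ha' (x + y))
        rw [map_add]
        exact hx.add_right hy
      algebraMap_mem' := fun r => by
        show Commute b (cfcHom ha' (algebraMap ℝ C(spectrum ℝ a, ℝ) r))
        rw [AlgHomClass.commutes, Algebra.algebraMap_eq_smul_one]
        exact (Commute.one_right b).smul_right r }
  have hS : IsClosed (S : Set C(spectrum ℝ a, ℝ)) := by
    have : (S : Set C(spectrum ℝ a, ℝ)) =
        (fun g => b * cfcHom ha' g - cfcHom ha' g * b) ⁻¹' {0} := by
      ext g
      simp only [Set.mem_preimage, Set.mem_singleton_iff, sub_eq_zero]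
      exact Iff.rfl
    rw [this]
    exact isClosed_singleton.preimage
      ((continuous_const.mul hcont).sub (hcont.mul continuous_const))
  have hX : (Polynomial.X : ℝ[X]).toContinuousMapOn (spectrum ℝ a) ∈ S := by
    have hid : (Polynomial.X : ℝ[X]).toContinuousMapOn (spectrum ℝ a) =
        (ContinuousMap.id ℝ).restrict (spectrum ℝ a) := by
      ext x; simp
    show Commute b _
    rw [hid, cfcHom_id ha']
    exact h
  have hle : polynomialFunctions (spectrum ℝ a) ≤ S := by
    rw [polynomialFunctions.eq_adjoin_X]
    apply Algebra.adjoin_le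
    rintro x hx
    simp only [Set.mem_singleton_iff] at hx
    subst hx
    exact hX
  have hcl : (polynomialFunctions (spectrum ℝ a)).topologicalClosure ≤ S :=
    Subalgebra.topologicalClosure_minimal hle hS
  rw [polynomialFunctions.topologicalClosure] at hcl
  exact hcl Algebra.mem_top


/-- If two Hilbert-space representations of an idempotented `*`-algebra satisfying (U1) and
(U3) are isomorphic via a continuous (bounded, bijective) `A`-module map, then they are
isomorphic via a *unitary* `A`-module isomorphism. -/
theorem exists_unitary_iso_of_continuous_iso
    {A : Type*} [NonUnitalRing A] [StarRing A] [Module ℂ A]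
    [IsScalarTower ℂ A A] [SMulCommClass ℂ A A] [StarModule ℂ A]
    (hA : IsIdempotented A)
    {V : Type*} [NormedAddCommGroup V] [InnerProductSpace ℂ V] [CompleteSpace V]
    {V' : Type*} [NormedAddCommGroup V'] [InnerProductSpace ℂ V'] [CompleteSpace V']
    (R : StarRep A V) (R' : StarRep A V')
    (f : V →L[ℂ] V') (hbij : Function.Bijective f)
    (hf : ∀ (a : A) (v : V), f (R.ρ a v) = R'.ρ a (f v)) :
    ∃ g : V ≃ₗᵢ[ℂ] V', ∀ (a : A) (v : V), g (R.ρ a v) = R'.ρ a (g v) := by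
  classical
  set f' := ContinuousLinearMap.adjoint f with hf'
  -- adjoint intertwines
  have hadj : ∀ (a : A) (u : V'), f' (R'.ρ a u) = R.ρ a (f' u) := by
    intro a u
    apply ext_inner_left ℂ
    intro w
    rw [ContinuousLinearMap.adjoint_inner_right]
    calc ⟪f w, R'.ρ a u⟫ = ⟪R'.ρ (star a) (f w), u⟫ := by
          rw [R'.star_apply (star a) (f w) u, star_star]
      _ = ⟪f (R.ρ (star a) w), u⟫ := by rw [hf]
      _ = ⟪R.ρ (star a) w, f' u⟫ := by rw [← ContinuousLinearMap.adjoint_inner_right]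
      _ = ⟪w, R.ρ a (f' u)⟫ := by rw [R.star_apply (star a), star_star]
  -- the positive operator T = f† f
  set T : V →L[ℂ] V := f' ∘L f with hT
  have hTapp : ∀ v : V, T v = f' (f v) := fun v => rfl
  have hTsa : IsSelfAdjoint T := by
    rw [ContinuousLinearMap.isSelfAdjoint_iff']
    show ContinuousLinearMap.adjoint (f' ∘L f) = T
    rw [ContinuousLinearMap.adjoint_comp, hf', ContinuousLinearMap.adjoint_adjoint]
  have hTpos : (0 : V →L[ℂ] V) ≤ T := by
    rw [ContinuousLinearMap.nonneg_iff_isPositive, ContinuousLinearMap.isPositive_def']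
    refine ⟨hTsa, fun x => ?_⟩
    have : T.reApplyInnerSelf x = RCLike.re ⟪f x, f x⟫ := by
      unfold ContinuousLinearMap.reApplyInnerSelf
      rw [hTapp, hf', ContinuousLinearMap.adjoint_inner_left]
    rw [this]
    exact inner_self_nonneg
  -- T is invertible
  have hker : LinearMap.ker (f : V →ₗ[ℂ] V') = ⊥ := LinearMap.ker_eq_bot.mpr hbij.1
  have hrange : LinearMap.range (f : V →ₗ[ℂ] V') = ⊤ := LinearMap.range_eq_top.mpr hbij.2
  set e : V ≃L[ℂ] V' := ContinuousLinearEquiv.ofBijective f hker hrange with he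
  have hec : ∀ v, e v = f v := fun v => rfl
  set g0 : V' →L[ℂ] V := (e.symm : V' →L[ℂ] V) with hg0
  have hfg : ∀ x, f (g0 x) = x := fun x => by
    show f (e.symm x) = x
    rw [← hec, e.apply_symm_apply]
  have hgf : ∀ x, g0 (f x) = x := fun x => by
    show e.symm (f x) = x
    rw [← hec, e.symm_apply_apply]
  have hTunit : IsUnit T := by
    rw [isUnit_iff_exists]
    refine ⟨g0 ∘L ContinuousLinearMap.adjoint g0, ?_, ?_⟩
    · ext x
      show f' (f (g0 (ContinuousLinearMap.adjoint g0 x))) = x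
      rw [hfg]
      apply ext_inner_left ℂ
      intro w
      rw [ContinuousLinearMap.adjoint_inner_right, ContinuousLinearMap.adjoint_inner_right,
        hgf]
    · ext x
      show g0 (ContinuousLinearMap.adjoint g0 (f' (f x))) = x
      have : ContinuousLinearMap.adjoint g0 (f' (f x)) = f x := by
        apply ext_inner_left ℂ
        intro w
        rw [ContinuousLinearMap.adjoint_inner_right, hf',
          ContinuousLinearMap.adjoint_inner_right, hfg]
      rw [this, hgf]
  -- spectrum of T is positive
  have hspec : ∀ x ∈ spectrum ℝ T, 0 < x := fun x hx =>
    lt_of_le_of_ne (spectrum_nonneg_of_nonneg hTpos hx)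
      (by rintro rfl; exact spectrum.zero_notMem ℝ hTunit hx)
  have hfun : ContinuousOn (fun x : ℝ => (Real.sqrt x)⁻¹) (spectrum ℝ T) :=
    Real.continuous_sqrt.continuousOn.inv₀ fun x hx =>
      Real.sqrt_ne_zero'.mpr (hspec x hx)
  -- the inverse square root S
  set S : V →L[ℂ] V := cfc (fun x : ℝ => (Real.sqrt x)⁻¹) T with hS
  have hSsa : IsSelfAdjoint S := cfc_predicate _ T
  have hSS : S * S = (↑hTunit.unit⁻¹ : V →L[ℂ] V) := by
    rw [hS, ← cfc_mul _ _ T hfun hfun]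
    have : ∀ x ∈ spectrum ℝ T, (Real.sqrt x)⁻¹ * (Real.sqrt x)⁻¹ = x⁻¹ := fun x hx => by
      rw [← mul_inv, Real.mul_self_sqrt (hspec x hx).le]
    rw [cfc_congr this]
    have := cfc_inv_id (R := ℝ) hTunit.unit
    rw [hTunit.unit_spec] at this
    exact this
  have hSST : S * S * T = 1 := by
    rw [hSS]
    nth_rewrite 2 [← hTunit.unit_spec]
    exact_mod_cast hTunit.unit.inv_mul
  have hTSS : T * (S * S) = 1 := by
    rw [hSS]
    nth_rewrite 1 [← hTunit.unit_spec]
    exact_mod_cast hTunit.unit.mul_inv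
  have hcommTS : Commute T S := commute_cfc_aux (Commute.refl T) _
  have hSTS : S * T * S = 1 := by
    calc S * T * S = S * S * T := by rw [mul_assoc, hcommTS.eq, ← mul_assoc]
    _ = 1 := hSST
  -- S is bijective
  have hSbij : Function.Bijective S := by
    have h1 : S * (S * T) = 1 := by rw [← mul_assoc, hSST]
    have h2 : (S * T) * S = 1 := by rw [mul_assoc, hcommTS.eq, ← mul_assoc, hSST]
    have hx : ∀ z, (S * T : V →L[ℂ] V) (S z) = z := fun z => by
      have := congrFun (congrArg DFunLike.coe h2) z
      simpa [ContinuousLinearMap.mul_apply] using this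
    have hy : ∀ z, S ((S * T : V →L[ℂ] V) z) = z := fun z => by
      have := congrFun (congrArg DFunLike.coe h1) z
      simpa [ContinuousLinearMap.mul_apply] using this
    constructor
    · intro x y hxy
      rw [← hx x, ← hx y, hxy]
    · intro y
      exact ⟨(S * T : V →L[ℂ] V) y, hy y⟩
  -- commutation of S with the representation
  have hcommR.ρT : ∀ a : A, Commute (R.ρ a) T := by
    intro a
    ext v
    show R.ρ a (T v) = T (R.ρ a v)
    rw [hTapp, hTapp, hf, hadj]
  have hcommR.ρS : ∀ a : A, Commute (R.ρ a) S := fun a =>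
    commute_cfc_aux (hcommR.ρT a) _
  -- the unitary isomorphism
  have hgbij : Function.Bijective (f ∘L S) := by
    simpa [ContinuousLinearMap.coe_comp'] using hbij.comp hSbij
  set G : V ≃ₗ[ℂ] V' := LinearEquiv.ofBijective (f ∘L S : V →L[ℂ] V').toLinearMap hgbij
    with hG
  have hGapp : ∀ v, G v = f (S v) := fun v => rfl
  have hselfS : ∀ (u w : V), ⟪S u, w⟫ = ⟪u, S w⟫ := by
    intro u w
    conv_lhs => rw [← (ContinuousLinearMap.isSelfAdjoint_iff'.mp hSsa)]
    rw [ContinuousLinearMap.adjoint_inner_left]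
  have hinner : ∀ u v : V, ⟪G u, G v⟫ = ⟪u, v⟫ := by
    intro u v
    rw [hGapp, hGapp]
    calc ⟪f (S u), f (S v)⟫ = ⟪S u, f' (f (S v))⟫ := by
          rw [hf', ContinuousLinearMap.adjoint_inner_right]
      _ = ⟪u, S (T (S v))⟫ := by rw [hselfS, hTapp]
      _ = ⟪u, v⟫ := by
          have : S (T (S v)) = (S * T * S) v := rfl
          rw [this, hSTS, ContinuousLinearMap.one_apply]
  refine ⟨G.isometryOfInner hinner, fun a v => ?_⟩
  rw [LinearEquiv.coe_isometryOfInner, hGapp, hGapp]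
  have hSR.ρ : S (R.ρ a v) = R.ρ a (S v) := by
    have := (hcommR.ρS a).eq
    calc S (R.ρ a v) = (S * R.ρ a) v := rfl
      _ = (R.ρ a * S) v := by rw [← this]
      _ = R.ρ a (S v) := rfl
  rw [hSR.ρ, hf]
end

section
/- Let A be an idempotented *-algebra, let V be a unitary representation of A and let v ∈ V. Then the net {e·v}, indexed by the set of self-adjoint idempotents of A directed by the order e ≤ e' iff e'ee' = e, converges to v. Explicitly: for every ε > 0 there exists a self-adjoint idempotent e ∈ A such that ‖v − e'·v‖ < ε for every self-adjoint idempotent e' ∈ A with e'ee' = e. -/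
local notation "⟪" x ", " y "⟫" => @inner ℂ _ _ x y

/-- The net `{e • v}`, indexed by the self-adjoint idempotents of `A` ordered by
`e ≤ e' ↔ e' * e * e' = e`, converges to `v`: for every `ε > 0` there is a self-adjoint
idempotent `e` such that `‖v - e' • v‖ < ε` for every self-adjoint idempotent `e' ≥ e`. -/
theorem approx_identity
    {A : Type*} [NonUnitalRing A] [StarRing A] [Module ℂ A]
    [IsScalarTower ℂ A A] [SMulCommClass ℂ A A] [StarModule ℂ A]
    (hA : IsIdempotented A)
    {V : Type*} [NormedAddCommGroup V] [InnerProductSpace ℂ V] [CompleteSpace V]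
    (R : URep A V) (v : V) :
    ∀ ε : ℝ, 0 < ε → ∃ e : A, e * e = e ∧ star e = e ∧
      ∀ e' : A, e' * e' = e' → star e' = e' → e' * e * e' = e → ‖v - R.ρ e' v‖ < ε := by
  classical
  intro ε hε
  -- Each self-adjoint idempotent acts as a contraction.
  have hcon : ∀ e : A, e * e = e → star e = e → ∀ x : V, ‖R.ρ e x‖ ≤ ‖x‖ := by
    intro e he hes x
    have h2 : R.ρ e (R.ρ e x) = R.ρ e x := by
      have h := congrArg (fun f => f x) (R.mul_apply e e)
      simp only [he, ContinuousLinearMap.comp_apply] at h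
      exact h.symm
    have h1 : ⟪R.ρ e x, R.ρ e x⟫ = ⟪x, R.ρ e x⟫ := by
      rw [R.star_apply, hes, h2]
    have h3 : ‖R.ρ e x‖ ^ 2 ≤ ‖x‖ * ‖R.ρ e x‖ := by
      calc ‖R.ρ e x‖ ^ 2 = ‖⟪R.ρ e x, R.ρ e x⟫‖ := by
            rw [inner_self_eq_norm_sq_to_K]
            simp [sq_abs]
        _ = ‖⟪x, R.ρ e x⟫‖ := by rw [h1]
        _ ≤ ‖x‖ * ‖R.ρ e x‖ := norm_inner_le_norm _ _
    nlinarith [norm_nonneg (R.ρ e x), norm_nonneg x]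
  -- Elements of the span are fixed by suitable idempotents.
  have hspan : ∀ w ∈ Submodule.span ℂ {w : V | ∃ (a : A) (u : V), R.ρ a u = w},
      ∃ F : Finset A, ∀ e : A, (∀ a ∈ F, e * a = a) → R.ρ e w = w := by
    intro w hw
    induction hw using Submodule.span_induction with
    | mem x hx =>
      obtain ⟨a, u, rfl⟩ := hx
      refine ⟨{a}, fun e he => ?_⟩
      have ha : e * a = a := he a (Finset.mem_singleton_self a)
      have h := congrArg (fun f => f u) (R.mul_apply e a)
      simp only [ha, ContinuousLinearMap.comp_apply] at h
      exact h.symm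
    | zero => exact ⟨∅, fun e _ => map_zero _⟩
    | add x y hx hy ihx ihy =>
      obtain ⟨F₁, h₁⟩ := ihx
      obtain ⟨F₂, h₂⟩ := ihy
      refine ⟨F₁ ∪ F₂, fun e he => ?_⟩
      rw [map_add, h₁ e (fun a ha => he a (Finset.mem_union_left _ ha)),
        h₂ e (fun a ha => he a (Finset.mem_union_right _ ha))]
    | smul c x hx ih =>
      obtain ⟨F, h⟩ := ih
      exact ⟨F, fun e he => by rw [map_smul, h e he]⟩
  -- Pick w close to v, and e fixing w.
  obtain ⟨w, hw, hdist⟩ := R.denseSmooth.exists_dist_lt v (show (0:ℝ) < ε / 5 by linarith)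
  obtain ⟨F, hF⟩ := hspan w hw
  obtain ⟨e, he2, hes, heF⟩ := hA F
  have hea : ∀ a ∈ F, e * a = a := by
    intro a ha
    have h := heF a ha
    conv_lhs => rw [← h]
    rw [← mul_assoc, ← mul_assoc, he2, h]
  have hew : R.ρ e w = w := hF e hea
  have hvw : ‖v - w‖ < ε / 5 := by rwa [← dist_eq_norm]
  have hve : ‖v - R.ρ e v‖ ≤ 2 * (ε / 5) := by
    have h1 : v - R.ρ e v = (v - w) + R.ρ e (w - v) := by
      rw [map_sub, hew]; abel
    calc ‖v - R.ρ e v‖ = ‖(v - w) + R.ρ e (w - v)‖ := by rw [h1]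
      _ ≤ ‖v - w‖ + ‖R.ρ e (w - v)‖ := norm_add_le _ _
      _ ≤ ‖v - w‖ + ‖w - v‖ := by linarith [hcon e he2 hes (w - v)]
      _ = ‖v - w‖ + ‖v - w‖ := by rw [norm_sub_rev]
      _ ≤ 2 * (ε / 5) := by linarith
  refine ⟨e, he2, hes, ?_⟩
  intro e' he'2 he's hcomp
  have h1 : e' * e = e := by
    conv_lhs => rw [← hcomp]
    rw [← mul_assoc, ← mul_assoc, he'2, hcomp]
  have hfix : R.ρ e' (R.ρ e v) = R.ρ e v := by
    have h := congrArg (fun f => f v) (R.mul_apply e' e)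
    simp only [h1, ContinuousLinearMap.comp_apply] at h
    exact h.symm
  have h2 : v - R.ρ e' v = (v - R.ρ e v) + R.ρ e' (R.ρ e v - v) := by
    rw [map_sub, hfix]; abel
  calc ‖v - R.ρ e' v‖ = ‖(v - R.ρ e v) + R.ρ e' (R.ρ e v - v)‖ := by rw [h2]
    _ ≤ ‖v - R.ρ e v‖ + ‖R.ρ e' (R.ρ e v - v)‖ := norm_add_le _ _
    _ ≤ ‖v - R.ρ e v‖ + ‖R.ρ e v - v‖ := by linarith [hcon e' he'2 he's (R.ρ e v - v)]
    _ = ‖v - R.ρ e v‖ + ‖v - R.ρ e v‖ := by rw [norm_sub_rev]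
    _ < ε := by linarith
end

section
/- Let A be an idempotented *-algebra, let V and V' be unitary representations of A, and let v ∈ V and v' ∈ V' be unit vectors. If φ_{V,v} = φ_{V',v'} as linear functionals on A, then the closure of A·v in V and the closure of A·v' in V' are unitarily isomorphic as A-modules. -/
local notation "⟪" x ", " y "⟫" => @inner ℂ _ _ x y

lemma denseRange_inclusion_closure {V : Type*} [NormedAddCommGroup V]
    [InnerProductSpace ℂ V] (p : Submodule ℂ V) :
    DenseRange (fun x : p => (⟨(x : V), p.le_topologicalClosure x.2⟩ :
      p.topologicalClosure)) := by
  intro w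
  rw [closure_subtype, ← Set.range_comp]
  have h2 : (Subtype.val ∘ fun x : p => (⟨(x : V), p.le_topologicalClosure x.2⟩ :
      p.topologicalClosure)) = fun x : p => (x : V) := rfl
  rw [h2]
  have h3 : (Set.range fun x : p => (x : V)) = (p : Set V) := Subtype.range_coe
  rw [h3, ← Submodule.topologicalClosure_coe]
  exact w.2

theorem gns_aux {A : Type*} [AddCommGroup A] [Module ℂ A]
    {V : Type*} [NormedAddCommGroup V] [InnerProductSpace ℂ V] [CompleteSpace V]
    {V' : Type*} [NormedAddCommGroup V'] [InnerProductSpace ℂ V'] [CompleteSpace V']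
    (L : A →ₗ[ℂ] V) (L' : A →ₗ[ℂ] V')
    (hLL' : ∀ a b : A, ⟪L a, L b⟫ = ⟪L' a, L' b⟫) :
    ∃ g : ↥((LinearMap.range L).topologicalClosure) ≃ₗᵢ[ℂ]
        ↥((LinearMap.range L').topologicalClosure),
      ∀ a : A, ∀ w : ↥((LinearMap.range L).topologicalClosure),
        (w : V) = L a → (g w : V') = L' a := by
  have hker : LinearMap.ker L = LinearMap.ker L' := by
    ext a
    simp only [LinearMap.mem_ker]
    rw [← @inner_self_eq_zero ℂ V, ← @inner_self_eq_zero ℂ V', hLL']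
  let g₁ : ↥(LinearMap.range L) ≃ₗ[ℂ] ↥(LinearMap.range L') :=
    ((L.quotKerEquivRange.symm).trans (Submodule.quotEquivOfEq _ _ hker)).trans
      L'.quotKerEquivRange
  have hg₁ : ∀ a : A, (g₁ ⟨L a, LinearMap.mem_range_self L a⟩ : V') = L' a := by
    intro a
    have h1 : L.quotKerEquivRange (Submodule.Quotient.mk a)
        = ⟨L a, LinearMap.mem_range_self L a⟩ := by
      ext; simp [LinearMap.quotKerEquivRange_apply_mk]
    have h2 : L.quotKerEquivRange.symm ⟨L a, LinearMap.mem_range_self L a⟩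
        = Submodule.Quotient.mk a := by
      rw [LinearEquiv.symm_apply_eq, h1]
    show (L'.quotKerEquivRange ((Submodule.quotEquivOfEq _ _ hker)
      (L.quotKerEquivRange.symm ⟨L a, LinearMap.mem_range_self L a⟩)) : V') = L' a
    rw [h2, Submodule.quotEquivOfEq_mk, LinearMap.quotKerEquivRange_apply_mk]
  have hg₁inner : ∀ x y : ↥(LinearMap.range L),
      ⟪(g₁ x : V'), (g₁ y : V')⟫ = ⟪(x : V), (y : V)⟫ := by
    rintro ⟨x, a, rfl⟩ ⟨y, b, rfl⟩
    rw [hg₁ a, hg₁ b, hLL']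
  have hg₁norm : ∀ x : ↥(LinearMap.range L), ‖g₁ x‖ = ‖x‖ := by
    intro x
    rw [show ‖g₁ x‖ = ‖(g₁ x : V')‖ from rfl, show ‖x‖ = ‖(x : V)‖ from rfl,
      @norm_eq_sqrt_re_inner ℂ, @norm_eq_sqrt_re_inner ℂ V, hg₁inner]
  haveI : CompleteSpace ↥((LinearMap.range L).topologicalClosure) :=
    (Submodule.isClosed_topologicalClosure _).completeSpace_coe
  haveI : CompleteSpace ↥((LinearMap.range L').topologicalClosure) :=
    (Submodule.isClosed_topologicalClosure _).completeSpace_coe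
  let ι : ↥(LinearMap.range L) →ₗᵢ[ℂ] ↥((LinearMap.range L).topologicalClosure) :=
    ⟨Submodule.inclusion (Submodule.le_topologicalClosure _), fun x => rfl⟩
  let ι' : ↥(LinearMap.range L') →ₗᵢ[ℂ] ↥((LinearMap.range L').topologicalClosure) :=
    ⟨Submodule.inclusion (Submodule.le_topologicalClosure _), fun x => rfl⟩
  let g₂ : ↥(LinearMap.range L) ≃ₗᵢ[ℂ] ↥(LinearMap.range L') := ⟨g₁, hg₁norm⟩
  let e := ι.toContinuousLinearMap
  let e' := ι'.toContinuousLinearMap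
  have h_dense : DenseRange e := denseRange_inclusion_closure _
  have h_dense' : DenseRange e' := denseRange_inclusion_closure _
  have h_e : IsUniformInducing e := ι.isometry.isUniformInducing
  have h_e' : IsUniformInducing e' := ι'.isometry.isUniformInducing
  let f₀ := (ι'.comp g₂.toLinearIsometry).toContinuousLinearMap
  let f₀' := (ι.comp g₂.symm.toLinearIsometry).toContinuousLinearMap
  let F := f₀.extend e
  let F' := f₀'.extend e'
  have hFe : ∀ x, F (e x) = f₀ x := fun x => ContinuousLinearMap.extend_eq f₀ h_dense h_e x
  have hF'e : ∀ x, F' (e' x) = f₀' x := fun x =>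
    ContinuousLinearMap.extend_eq f₀' h_dense' h_e' x
  have hFF' : ∀ w, F' (F w) = w := by
    intro w
    refine h_dense.induction_on w (isClosed_eq (F'.continuous.comp F.continuous) continuous_id) ?_
    intro x
    rw [hFe]
    have : f₀ x = e' (g₂ x) := rfl
    rw [this, hF'e]
    show ι (g₂.symm (g₂ x)) = ι x
    rw [g₂.symm_apply_apply]
  have hF'F : ∀ w, F (F' w) = w := by
    intro w
    refine h_dense'.induction_on w (isClosed_eq (F.continuous.comp F'.continuous) continuous_id) ?_
    intro x
    rw [hF'e]
    have : f₀' x = e (g₂.symm x) := rfl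
    rw [this, hFe]
    show ι' (g₂ (g₂.symm x)) = ι' x
    rw [g₂.apply_symm_apply]
  have hnorm : ∀ w, ‖F w‖ = ‖w‖ := by
    intro w
    refine h_dense.induction_on w
      (isClosed_eq (continuous_norm.comp F.continuous) continuous_norm) ?_
    intro x
    rw [hFe]
    show ‖ι' (g₂ x)‖ = ‖e x‖
    rw [ι'.norm_map, g₂.norm_map]
    rfl
  refine ⟨⟨⟨F.toLinearMap, F', hFF', hF'F⟩, hnorm⟩, ?_⟩
  intro a w hw
  have hx : w = e ⟨L a, LinearMap.mem_range_self L a⟩ := Subtype.ext hw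
  rw [hx]
  show (F (e ⟨L a, LinearMap.mem_range_self L a⟩) : V') = L' a
  rw [hFe]
  exact hg₁ a

/-- If two unit vectors in unitary representations have the same associated state, then the
closures of their `A`-orbits are unitarily isomorphic as `A`-modules. -/
theorem cyclic_subreps_iso_of_same_state
    {A : Type*} [NonUnitalRing A] [StarRing A] [Module ℂ A]
    [IsScalarTower ℂ A A] [SMulCommClass ℂ A A] [StarModule ℂ A]
    (hA : IsIdempotented A)
    {V : Type*} [NormedAddCommGroup V] [InnerProductSpace ℂ V] [CompleteSpace V]
    {V' : Type*} [NormedAddCommGroup V'] [InnerProductSpace ℂ V'] [CompleteSpace V']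
    (R : URep A V) (R' : URep A V') (v : V) (v' : V')
    (hv : ‖v‖ = 1) (hv' : ‖v'‖ = 1)
    (h : ∀ a : A, ⟪v, R.ρ a v⟫ = ⟪v', R'.ρ a v'⟫) :
    ∃ g : ↥((Submodule.span ℂ (Set.range fun a : A => R.ρ a v)).topologicalClosure) ≃ₗᵢ[ℂ]
        ↥((Submodule.span ℂ (Set.range fun a : A => R'.ρ a v')).topologicalClosure),
      ∀ (a : A)
        (w w₂ : ↥((Submodule.span ℂ (Set.range fun a : A => R.ρ a v)).topologicalClosure)),
        (w₂ : V) = R.ρ a (w : V) → ((g w₂ : V') = R'.ρ a ((g w : V'))) := by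
  classical
  let L : A →ₗ[ℂ] V :=
    { toFun := fun a => R.ρ a v
      map_add' := fun a b => by simp
      map_smul' := fun c a => by simp }
  let L' : A →ₗ[ℂ] V' :=
    { toFun := fun a => R'.ρ a v'
      map_add' := fun a b => by simp
      map_smul' := fun c a => by simp }
  have key : ∀ a b : A, ⟪L a, L b⟫ = ⟪L' a, L' b⟫ := by
    intro a b
    have e1 : ⟪L a, L b⟫ = ⟪v, R.ρ (star a * b) v⟫ := by
      rw [show (⟪L a, L b⟫ = ⟪R.ρ a v, R.ρ b v⟫) from rfl, R.star_apply, R.mul_apply]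
      rfl
    have e2 : ⟪L' a, L' b⟫ = ⟪v', R'.ρ (star a * b) v'⟫ := by
      rw [show (⟪L' a, L' b⟫ = ⟪R'.ρ a v', R'.ρ b v'⟫) from rfl, R'.star_apply, R'.mul_apply]
      rfl
    rw [e1, e2, h]
  have hS : Submodule.span ℂ (Set.range fun a : A => R.ρ a v) = LinearMap.range L := by
    have h1 : (Set.range fun a : A => R.ρ a v) = ↑(LinearMap.range L) :=
      (LinearMap.coe_range L).symm
    rw [h1, Submodule.span_eq]
  have hS' : Submodule.span ℂ (Set.range fun a : A => R'.ρ a v') = LinearMap.range L' := by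
    have h1 : (Set.range fun a : A => R'.ρ a v') = ↑(LinearMap.range L') :=
      (LinearMap.coe_range L').symm
    rw [h1, Submodule.span_eq]
  rw [hS, hS']
  obtain ⟨g, hg⟩ := gns_aux L L' key
  refine ⟨g, ?_⟩
  intro a w w₂ hw
  have hmaps : Set.MapsTo (R.ρ a) (LinearMap.range L : Set V) (LinearMap.range L : Set V) := by
    rintro x ⟨b, rfl⟩
    refine ⟨a * b, ?_⟩
    show R.ρ (a * b) v = R.ρ a (L b)
    rw [R.mul_apply]
    rfl
  have hmapsW : Set.MapsTo (R.ρ a) ((LinearMap.range L).topologicalClosure : Set V)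
      ((LinearMap.range L).topologicalClosure : Set V) := by
    rw [Submodule.topologicalClosure_coe]
    exact hmaps.closure (R.ρ a).continuous
  have key2 : ∀ u : ↥((LinearMap.range L).topologicalClosure),
      (g ⟨R.ρ a (u : V), hmapsW u.2⟩ : V') = R'.ρ a (g u : V') := by
    intro u
    refine (denseRange_inclusion_closure (LinearMap.range L)).induction_on u ?_ ?_
    · exact isClosed_eq
        (continuous_subtype_val.comp (g.continuous.comp (Continuous.subtype_mk
          ((R.ρ a).continuous.comp continuous_subtype_val) _)))
        ((R'.ρ a).continuous.comp (continuous_subtype_val.comp g.continuous))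
    · rintro ⟨x, b, rfl⟩
      have e1 : (g ⟨L b, Submodule.le_topologicalClosure _ (LinearMap.mem_range_self L b)⟩ : V')
          = L' b := hg b _ rfl
      have e2 : R.ρ a (L b) = L (a * b) := by
        show R.ρ a (R.ρ b v) = R.ρ (a * b) v
        rw [R.mul_apply]
        rfl
      have e3 : (g ⟨R.ρ a (L b), hmapsW (Submodule.le_topologicalClosure _
          (LinearMap.mem_range_self L b))⟩ : V') = L' (a * b) := hg (a * b) _ e2
      show (g ⟨R.ρ a (L b), _⟩ : V') = R'.ρ a (g ⟨L b, _⟩ : V')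
      rw [e3, e1]
      show R'.ρ (a * b) v' = R'.ρ a (R'.ρ b v')
      rw [R'.mul_apply]
      rfl
  have hx : w₂ = ⟨R.ρ a (w : V), hmapsW w.2⟩ := Subtype.ext hw
  rw [hx]
  exact key2 w
end

section
/- Let A be an idempotented *-algebra, let V and V' be unitary representations of A, and let v ∈ V, v' ∈ V' be unit vectors such that the closure of A·v equals V and the closure of A·v' equals V'. Suppose there exists t > 0 such that t·φ_{V,v}(a*a) ≤ φ_{V',v'}(a*a) for all a ∈ A (both sides being nonnegative real numbers). Then there exists a continuous A-module homomorphism f : V' → V with f(v') = v. -/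
local notation "⟪" x ", " y "⟫" => @inner ℂ _ _ x y

section Aux

variable {A : Type*} [NonUnitalRing A] [StarRing A] [Module ℂ A]
  {W : Type*} [NormedAddCommGroup W] [InnerProductSpace ℂ W]

lemma URep.re_inner_star_mul (R : URep A W) (a : A) (u : W) :
    (⟪u, R.ρ (star a * a) u⟫).re = ‖R.ρ a u‖ ^ 2 := by
  have h := R.star_apply a u (R.ρ a u)
  rw [R.mul_apply, ContinuousLinearMap.comp_apply, ← h]
  simpa using inner_self_eq_norm_sq (𝕜 := ℂ) (R.ρ a u)

lemma URep.proj_dist (R : URep A W) {e : A} (he : e * e = e) (hes : star e = e)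
    (u x : W) : ‖R.ρ e u - u‖ ≤ ‖R.ρ e x - u‖ := by
  have hPP : ∀ z : W, R.ρ e (R.ρ e z) = R.ρ e z := by
    intro z
    have h := R.mul_apply e e
    rw [he] at h
    exact (ContinuousLinearMap.ext_iff.mp h z).symm
  have hzero : R.ρ e (R.ρ e u - u) = 0 := by
    rw [map_sub, hPP, sub_self]
  have hinner : ⟪R.ρ e x - R.ρ e u, R.ρ e u - u⟫ = 0 := by
    have h1 : R.ρ e x - R.ρ e u = R.ρ e (x - u) := by rw [map_sub]
    rw [h1, R.star_apply, hes, hzero, inner_zero_right]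
  have hpyth := norm_add_sq_eq_norm_sq_add_norm_sq_of_inner_eq_zero _ _ hinner
  rw [sub_add_sub_cancel] at hpyth
  nlinarith [norm_nonneg (R.ρ e x - u), norm_nonneg (R.ρ e u - u),
    norm_nonneg (R.ρ e x - R.ρ e u)]

end Aux

set_option maxHeartbeats 1000000 in
/-- If `t·φ_{V,v}(a*a) ≤ φ_{V',v'}(a*a)` for some `t > 0` and cyclic unit vectors `v, v'`,
then there is a continuous `A`-module homomorphism `f : V' → V` with `f v' = v`. -/
theorem exists_hom_of_dominated_state
    {A : Type*} [NonUnitalRing A] [StarRing A] [Module ℂ A]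
    [IsScalarTower ℂ A A] [SMulCommClass ℂ A A] [StarModule ℂ A]
    (hA : IsIdempotented A)
    {V : Type*} [NormedAddCommGroup V] [InnerProductSpace ℂ V] [CompleteSpace V]
    {V' : Type*} [NormedAddCommGroup V'] [InnerProductSpace ℂ V'] [CompleteSpace V']
    (R : URep A V) (R' : URep A V') (v : V) (v' : V')
    (hv : ‖v‖ = 1) (hv' : ‖v'‖ = 1)
    (hcyc : Dense (Set.range fun a : A => R.ρ a v))
    (hcyc' : Dense (Set.range fun a : A => R'.ρ a v'))
    (t : ℝ) (ht : 0 < t)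
    (hdom : ∀ a : A, t * (⟪v, R.ρ (star a * a) v⟫).re ≤ (⟪v', R'.ρ (star a * a) v'⟫).re) :
    ∃ f : V' →L[ℂ] V, (∀ (a : A) (w : V'), f (R'.ρ a w) = R.ρ a (f w)) ∧ f v' = v := by
  classical
  set L : A →ₗ[ℂ] V :=
    { toFun := fun a => R.ρ a v
      map_add' := fun a b => by simp
      map_smul' := fun c a => by simp } with hL
  set L' : A →ₗ[ℂ] V' :=
    { toFun := fun a => R'.ρ a v'
      map_add' := fun a b => by simp
      map_smul' := fun c a => by simp } with hL'
  have hLa : ∀ a : A, L a = R.ρ a v := fun a => rfl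
  have hL'a : ∀ a : A, L' a = R'.ρ a v' := fun a => rfl
  have hdom2 : ∀ a : A, t * ‖L a‖ ^ 2 ≤ ‖L' a‖ ^ 2 := by
    intro a
    have h := hdom a
    rwa [R.re_inner_star_mul, R'.re_inner_star_mul] at h
  -- kernel containment
  have hker : LinearMap.ker L' ≤ LinearMap.ker L := by
    intro a ha
    rw [LinearMap.mem_ker] at ha ⊢
    have h := hdom2 a
    rw [ha, norm_zero] at h
    have h0 : ((0:ℝ)) ^ 2 = 0 := by norm_num
    rw [h0] at h
    have hx : ‖L a‖ ^ 2 ≤ 0 := by nlinarith [ht, h]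
    have hn : ‖L a‖ ^ 2 = 0 := le_antisymm hx (sq_nonneg _)
    exact norm_eq_zero.mp (pow_eq_zero_iff two_ne_zero |>.mp hn)
  -- the densely-defined map
  set g : ↥(LinearMap.range L') →ₗ[ℂ] V :=
    ((LinearMap.ker L').liftQ L hker).comp
      (LinearMap.quotKerEquivRange L').symm.toLinearMap with hgdef
  have hg : ∀ (a : A) (h : L' a ∈ LinearMap.range L'), g ⟨L' a, h⟩ = L a := by
    intro a h
    have h1 : (LinearMap.quotKerEquivRange L').symm ⟨L' a, h⟩ =
        Submodule.Quotient.mk a := by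
      rw [LinearEquiv.symm_apply_eq]
      exact Subtype.ext (LinearMap.quotKerEquivRange_apply_mk L' a)
    simp only [hgdef, LinearMap.comp_apply, LinearEquiv.coe_toLinearMap, h1,
      Submodule.liftQ_apply]
  have hgb : ∀ w : ↥(LinearMap.range L'), ‖g w‖ ≤ (Real.sqrt t)⁻¹ * ‖(w : V')‖ := by
    rintro ⟨w, hw⟩
    obtain ⟨a, rfl⟩ := hw
    rw [hg a (LinearMap.mem_range_self L' a)]
    have h2 := hdom2 a
    have hst : 0 < Real.sqrt t := Real.sqrt_pos.mpr ht
    have h3 : Real.sqrt t * ‖L a‖ ≤ ‖L' a‖ := by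
      have h4 : (Real.sqrt t * ‖L a‖) ^ 2 ≤ ‖L' a‖ ^ 2 := by
        rw [mul_pow, Real.sq_sqrt ht.le]; exact h2
      nlinarith [norm_nonneg (L' a), norm_nonneg (L a), hst.le]
    have h5 : ‖((⟨L' a, LinearMap.mem_range_self L' a⟩ : ↥(LinearMap.range L')) : V')‖
        = ‖L' a‖ := rfl
    rw [h5, inv_mul_eq_div, le_div_iff₀ hst, mul_comm]
    exact h3
  set g₂ : ↥(LinearMap.range L') →L[ℂ] V := g.mkContinuous _ hgb with hg₂def
  have hg₂ : ∀ (a : A) (h : L' a ∈ LinearMap.range L'), g₂ ⟨L' a, h⟩ = L a := by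
    intro a h
    rw [hg₂def]; exact hg a h
  -- dense range of the inclusion
  have hdr : DenseRange ((LinearMap.range L').subtypeL) := by
    have hs : Set.range ((LinearMap.range L').subtypeL) =
        Set.range fun a : A => R'.ρ a v' := by
      ext x
      constructor
      · rintro ⟨⟨y, a, rfl⟩, rfl⟩; exact ⟨a, rfl⟩
      · rintro ⟨a, rfl⟩; exact ⟨⟨L' a, LinearMap.mem_range_self L' a⟩, rfl⟩
    rw [DenseRange, hs]
    exact hcyc'
  have hui : IsUniformInducing ((LinearMap.range L').subtypeL) :=
    isUniformEmbedding_subtype_val.isUniformInducing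
  set f : V' →L[ℂ] V := g₂.extend ((LinearMap.range L').subtypeL) with hfdef
  have hfL : ∀ a : A, f (L' a) = L a := by
    intro a
    have h := ContinuousLinearMap.extend_eq g₂ hdr hui
      ⟨L' a, LinearMap.mem_range_self L' a⟩
    rw [hg₂ a (LinearMap.mem_range_self L' a)] at h
    exact h
  refine ⟨f, ?_, ?_⟩
  · -- intertwining
    intro a w
    have heq : (fun w => f (R'.ρ a w)) = fun w => R.ρ a (f w) := by
      refine Continuous.ext_on hcyc' (f.continuous.comp (R'.ρ a).continuous)
        ((R.ρ a).continuous.comp f.continuous) ?_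
      rintro _ ⟨b, rfl⟩
      show f (R'.ρ a (R'.ρ b v')) = R.ρ a (f (R'.ρ b v'))
      have h1 : R'.ρ a (R'.ρ b v') = L' (a * b) := by
        rw [hL'a, R'.mul_apply, ContinuousLinearMap.comp_apply]
      have h2 : (R'.ρ b v') = L' b := rfl
      rw [h1, h2, hfL (a * b), hfL b, hLa, hLa, R.mul_apply,
        ContinuousLinearMap.comp_apply]
    exact congrFun heq w
  · -- f v' = v
    have key : ∀ ε : ℝ, 0 < ε →
        ∃ e : A, ‖R.ρ e v - v‖ < ε ∧ ‖R'.ρ e v' - v'‖ < ε := by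
      intro ε hε
      obtain ⟨x, hxmem, hx⟩ := Metric.mem_closure_iff.mp (hcyc v) ε hε
      obtain ⟨a, rfl⟩ := hxmem
      obtain ⟨y, hymem, hy⟩ := Metric.mem_closure_iff.mp (hcyc' v') ε hε
      obtain ⟨b, rfl⟩ := hymem
      obtain ⟨e, he, hes, hF⟩ := hA {a, b}
      have ha := hF a (by simp)
      have hb := hF b (by simp)
      refine ⟨e, ?_, ?_⟩
      · have h1 : R.ρ a v = R.ρ e (R.ρ (a * e) v) := by
          rw [← ContinuousLinearMap.comp_apply, ← R.mul_apply, ← mul_assoc, ha]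
        calc ‖R.ρ e v - v‖ ≤ ‖R.ρ e (R.ρ (a * e) v) - v‖ := R.proj_dist he hes v _
          _ = ‖R.ρ a v - v‖ := by rw [← h1]
          _ < ε := by rwa [← norm_sub_rev, ← dist_eq_norm]
      · have h1 : R'.ρ b v' = R'.ρ e (R'.ρ (b * e) v') := by
          rw [← ContinuousLinearMap.comp_apply, ← R'.mul_apply, ← mul_assoc, hb]
        calc ‖R'.ρ e v' - v'‖ ≤ ‖R'.ρ e (R'.ρ (b * e) v') - v'‖ := R'.proj_dist he hes v' _
          _ = ‖R'.ρ b v' - v'‖ := by rw [← h1]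
          _ < ε := by rwa [← norm_sub_rev, ← dist_eq_norm]
    have hseq : ∀ n : ℕ, ∃ e : A,
        ‖R.ρ e v - v‖ < 1 / (n + 1) ∧ ‖R'.ρ e v' - v'‖ < 1 / (n + 1) := by
      intro n
      exact key (1 / (n + 1)) (by positivity)
    choose en h1 h2 using hseq
    have hlim : Filter.Tendsto (fun n : ℕ => (1 : ℝ) / (n + 1)) Filter.atTop (nhds 0) :=
      tendsto_one_div_add_atTop_nhds_zero_nat
    have t1 : Filter.Tendsto (fun n => R'.ρ (en n) v') Filter.atTop (nhds v') := by
      rw [tendsto_iff_norm_sub_tendsto_zero]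
      exact squeeze_zero (fun n => norm_nonneg _) (fun n => (h2 n).le) hlim
    have t4 : Filter.Tendsto (fun n => R.ρ (en n) v) Filter.atTop (nhds v) := by
      rw [tendsto_iff_norm_sub_tendsto_zero]
      exact squeeze_zero (fun n => norm_nonneg _) (fun n => (h1 n).le) hlim
    have t2 : Filter.Tendsto (fun n => f (R'.ρ (en n) v')) Filter.atTop (nhds (f v')) :=
      (f.continuous.tendsto v').comp t1
    have t3 : (fun n => f (R'.ρ (en n) v')) = fun n => R.ρ (en n) v :=
      funext fun n => hfL (en n)
    rw [t3] at t2
    exact tendsto_nhds_unique t2 t4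
end

section
/- Let A be an idempotented *-algebra, let V be a unitary representation of A, and let v ∈ V be a unit vector such that the closure of A·v equals V. Then φ_{V,v} is a pure state of A (an extreme point of the convex set E(A) of all states of A) if and only if V is irreducible. -/
local notation "⟪" x ", " y "⟫" => @inner ℂ _ _ x y

/-- The state associated with a unitary representation `R` and a vector `v`; with Mathlib's
convention that the inner product is linear in the *second* variable, the paper's
`φ_{V,v}(a) = ⟨a·v, v⟩` (linear in the first variable) becomes `a ↦ ⟪v, ρ a v⟫`. -/
noncomputable def URep.coefFn {A : Type*} [NonUnitalRing A] [StarRing A] [Module ℂ A]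
    {V : Type*} [NormedAddCommGroup V] [InnerProductSpace ℂ V]
    (R : URep A V) (v : V) : A →ₗ[ℂ] ℂ where
  toFun a := ⟪v, R.ρ a v⟫
  map_add' a b := by
    have h : R.ρ (a + b) = R.ρ a + R.ρ b := map_add _ _ _
    simp [h, inner_add_right]
  map_smul' c a := by
    have h : R.ρ (c • a) = c • R.ρ a := map_smul _ _ _
    simp [h, inner_smul_right]

/-- A state of `A`: a linear functional satisfying (S1), (S2) and (S3). -/
def IsState {A : Type*} [NonUnitalRing A] [StarRing A] [Module ℂ A]
    (ψ : A →ₗ[ℂ] ℂ) : Prop :=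
  (∀ a : A, ∃ r : ℝ, 0 ≤ r ∧ ψ (star a * a) = (r : ℂ)) ∧
  (∀ b : A, ∃ r : ℝ, ∀ a : A, (ψ (star a * star b * b * a)).re ≤ r * (ψ (star a * a)).re) ∧
  IsLUB {x : ℝ | ∃ e : A, e * e = e ∧ star e = e ∧ (ψ e).re = x} 1


set_option linter.unusedSectionVars false
set_option maxHeartbeats 1000000

section AuxiliaryLemmas

namespace StateAux
variable {A : Type*} [NonUnitalRing A] [StarRing A] [Module ℂ A]
    [IsScalarTower ℂ A A] [SMulCommClass ℂ A A] [StarModule ℂ A]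

theorem stateHerm (ψ : A →ₗ[ℂ] ℂ) (hpos : ∀ a : A, ∃ r : ℝ, 0 ≤ r ∧ ψ (star a * a) = (r : ℂ)) :
    ∀ a b : A, (starRingEnd ℂ) (ψ (star b * a)) = ψ (star a * b) := by
  have him : ∀ x : A, (ψ (star x * x)).im = 0 := by
    intro x
    obtain ⟨r, -, hr⟩ := hpos x
    rw [hr, Complex.ofReal_im]
  intro a b
  set x := ψ (star a * b) with hx
  set y := ψ (star b * a) with hy
  have e1 : star (a + b) * (a + b) = star a * a + star a * b + star b * a + star b * b := by
    rw [star_add]; noncomm_ring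
  have h1 : x.im + y.im = 0 := by
    have := him (a + b)
    rw [e1, map_add, map_add, map_add] at this
    simp only [Complex.add_im, him a, him b] at this
    rw [← hx, ← hy] at this
    linarith
  have e2 : star (a + Complex.I • b) * (a + Complex.I • b)
      = star a * a + Complex.I • (star a * b) + (-Complex.I) • (star b * a)
        + star b * b := by
    rw [star_add, star_smul]
    rw [show star Complex.I = -Complex.I by simp [Complex.star_def, Complex.conj_I]]
    rw [add_mul, mul_add, mul_add]
    rw [mul_smul_comm, smul_mul_assoc, smul_mul_assoc, mul_smul_comm, smul_smul]
    rw [show (-Complex.I) * Complex.I = 1 by simp [Complex.I_mul_I], one_smul]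
    abel
  have h2 : x.re - y.re = 0 := by
    have := him (a + Complex.I • b)
    rw [e2, map_add, map_add, map_add, map_smul, map_smul] at this
    simp only [Complex.add_im, him a, him b, smul_eq_mul, Complex.mul_im,
      Complex.I_re, Complex.I_im, Complex.neg_re, Complex.neg_im] at this
    rw [← hx, ← hy] at this
    ring_nf at this ⊢
    linarith
  rw [Complex.ext_iff]
  constructor
  · rw [Complex.conj_re]; linarith
  · rw [Complex.conj_im]; linarith

theorem stateCS (ψ : A →ₗ[ℂ] ℂ)
    (hpos : ∀ a : A, ∃ r : ℝ, 0 ≤ r ∧ ψ (star a * a) = (r : ℂ)) (a b : A) :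
    ‖ψ (star a * b)‖ ^ 2 ≤ (ψ (star a * a)).re * (ψ (star b * b)).re := by
  letI core : PreInnerProductSpace.Core ℂ A :=
    { inner := fun a b => ψ (star a * b)
      conj_inner_symm := fun x y => stateHerm ψ hpos x y
      re_inner_nonneg := fun x => by
        obtain ⟨r, hr0, hr⟩ := hpos x
        show 0 ≤ (ψ (star x * x)).re
        rw [hr, Complex.ofReal_re]; exact hr0
      add_left := fun x y z => by
        show ψ (star (x + y) * z) = ψ (star x * z) + ψ (star y * z)
        rw [star_add, add_mul, map_add]
      smul_left := fun x y r => by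
        show ψ (star (r • x) * y) = (starRingEnd ℂ) r * ψ (star x * y)
        rw [star_smul, smul_mul_assoc, map_smul, smul_eq_mul, Complex.star_def] }
  have key := InnerProductSpace.Core.inner_mul_inner_self_le (𝕜 := ℂ) (F := A) a b
  have hsymm : ‖ψ (star b * a)‖ = ‖ψ (star a * b)‖ := by
    rw [← stateHerm ψ hpos a b, RCLike.norm_conj]
  have : ‖ψ (star a * b)‖ * ‖ψ (star b * a)‖ ≤ (ψ (star a * a)).re * (ψ (star b * b)).re := key
  rw [hsymm, ← sq] at this
  exact this

end StateAux

open StateAux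

namespace URep
variable {A : Type*} [NonUnitalRing A] [StarRing A] [Module ℂ A]
    [IsScalarTower ℂ A A] [SMulCommClass ℂ A A] [StarModule ℂ A]
    {V : Type*} [NormedAddCommGroup V] [InnerProductSpace ℂ V] (R : URep A V)

lemma rho_inner (a : A) (u w : V) : ⟪u, R.ρ a w⟫ = ⟪R.ρ (star a) u, w⟫ := by
  rw [R.star_apply, star_star]

lemma inner_rho_mul (a b : A) (u w : V) :
    ⟪u, R.ρ (star a * b) w⟫ = ⟪R.ρ a u, R.ρ b w⟫ := by
  rw [R.mul_apply, ContinuousLinearMap.comp_apply, R.rho_inner, star_star]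

lemma inner_idem {e : A} (he : e * e = e) (hse : star e = e) (u : V) :
    ⟪u, R.ρ e u⟫ = ((‖R.ρ e u‖ : ℂ) ^ 2) := by
  have h1 : star e * e = e := by rw [hse, he]
  calc ⟪u, R.ρ e u⟫ = ⟪u, R.ρ (star e * e) u⟫ := by rw [h1]
    _ = ⟪R.ρ e u, R.ρ e u⟫ := R.inner_rho_mul e e u u
    _ = ((‖R.ρ e u‖ : ℂ) ^ 2) := inner_self_eq_norm_sq_to_K _

lemma norm_rho_idem_le {e : A} (he : e * e = e) (hse : star e = e) (u : V) :
    ‖R.ρ e u‖ ≤ ‖u‖ := by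
  rcases eq_or_lt_of_le (norm_nonneg (R.ρ e u)) with h0 | h0
  · rw [← h0]; exact norm_nonneg u
  · have h2 : (‖R.ρ e u‖ : ℝ) ^ 2 = ‖⟪u, R.ρ e u⟫‖ := by
      rw [R.inner_idem he hse, ← Complex.ofReal_pow, Complex.norm_real,
        Real.norm_eq_abs, abs_of_nonneg (by positivity)]
    have h3 : ‖⟪u, R.ρ e u⟫‖ ≤ ‖u‖ * ‖R.ρ e u‖ := norm_inner_le_norm u _
    nlinarith

/-- Left absorption: if `e * a * e = a` for a self-adjoint idempotent, then `e * a = a`. -/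
lemma left_absorb {e a : A} (he : e * e = e) (hfix : e * a * e = a) : e * a = a := by
  calc e * a = e * (e * a * e) := by rw [hfix]
    _ = (e * e) * a * e := by noncomm_ring
    _ = e * a * e := by rw [he]
    _ = a := hfix

lemma exists_idem_fix (hA : IsIdempotented A) (x : V)
    (hx : x ∈ Submodule.span ℂ {w : V | ∃ (a : A) (u : V), R.ρ a u = w}) :
    ∃ e : A, e * e = e ∧ star e = e ∧ R.ρ e x = x := by
  classical
  let S : Submodule ℂ V :=
    { carrier := {x | ∃ e : A, e * e = e ∧ star e = e ∧ R.ρ e x = x}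
      add_mem' := by
        rintro x y ⟨e₁, he₁, hs₁, hx₁⟩ ⟨e₂, he₂, hs₂, hx₂⟩
        obtain ⟨e₃, he₃, hs₃, hfix⟩ := hA {e₁, e₂}
        have h1 : e₃ * e₁ = e₁ := left_absorb he₃ (hfix e₁ (by simp))
        have h2 : e₃ * e₂ = e₂ := left_absorb he₃ (hfix e₂ (by simp))
        refine ⟨e₃, he₃, hs₃, ?_⟩
        have k1 : R.ρ e₃ x = x := by
          conv_lhs => rw [← hx₁]
          rw [← ContinuousLinearMap.comp_apply, ← R.mul_apply, h1, hx₁]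
        have k2 : R.ρ e₃ y = y := by
          conv_lhs => rw [← hx₂]
          rw [← ContinuousLinearMap.comp_apply, ← R.mul_apply, h2, hx₂]
        rw [map_add, k1, k2]
      zero_mem' := by
        obtain ⟨e, he, hs, -⟩ := hA ∅
        exact ⟨e, he, hs, map_zero _⟩
      smul_mem' := by
        rintro c x ⟨e, he, hs, hx⟩
        exact ⟨e, he, hs, by rw [map_smul, hx]⟩ }
  have hle : Submodule.span ℂ {w : V | ∃ (a : A) (u : V), R.ρ a u = w} ≤ S := by
    rw [Submodule.span_le]
    rintro w ⟨a, u, rfl⟩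
    obtain ⟨e, he, hs, hfix⟩ := hA {a}
    have h1 : e * a = a := left_absorb he (hfix a (by simp))
    exact ⟨e, he, hs, by rw [← ContinuousLinearMap.comp_apply, ← R.mul_apply, h1]⟩
  exact hle hx

lemma exists_approx_idem (hA : IsIdempotented A) (w : V) {ε : ℝ} (hε : 0 < ε) :
    ∃ e : A, e * e = e ∧ star e = e ∧ ‖R.ρ e w - w‖ < ε := by
  have hw : w ∈ closure (↑(Submodule.span ℂ {w : V | ∃ (a : A) (u : V), R.ρ a u = w}) : Set V) :=
    R.denseSmooth w
  rw [Metric.mem_closure_iff] at hw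
  obtain ⟨x, hxS, hxd⟩ := hw (ε / 2) (by linarith)
  obtain ⟨e, he, hs, hfix⟩ := R.exists_idem_fix hA x hxS
  refine ⟨e, he, hs, ?_⟩
  have h1 : R.ρ e w - w = R.ρ e (w - x) + (x - w) := by rw [map_sub, hfix]; abel
  have h2 : ‖R.ρ e (w - x)‖ ≤ ‖w - x‖ := R.norm_rho_idem_le he hs _
  have h3 : ‖w - x‖ < ε / 2 := by rwa [← dist_eq_norm]
  calc ‖R.ρ e w - w‖ ≤ ‖R.ρ e (w - x)‖ + ‖x - w‖ := by rw [h1]; exact norm_add_le _ _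
    _ < ε := by rw [norm_sub_rev x w]; linarith

lemma coefFn_apply (w : V) (a : A) : R.coefFn w a = ⟪w, R.ρ a w⟫ := rfl

lemma coefFn_mul_star (w : V) (a b : A) :
    R.coefFn w (star a * b) = ⟪R.ρ a w, R.ρ b w⟫ := R.inner_rho_mul a b w w

lemma coefFn_mul_self (w : V) (a : A) :
    R.coefFn w (star a * a) = ((‖R.ρ a w‖ : ℂ) ^ 2) := by
  rw [R.coefFn_mul_star, inner_self_eq_norm_sq_to_K]
  norm_cast

lemma isState_coef (hA : IsIdempotented A) (w : V) (hw : w ≠ 0) :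
    IsState ((((‖w‖ ^ 2)⁻¹ : ℝ) : ℂ) • R.coefFn w) := by
  have hw0 : (0:ℝ) < ‖w‖ := norm_pos_iff.mpr hw
  set c : ℝ := (‖w‖ ^ 2)⁻¹ with hc
  have hc0 : 0 < c := by positivity
  have happ : ∀ a : A, ((c : ℂ) • R.coefFn w) a = (c : ℂ) * R.coefFn w a := fun a => rfl
  have hsq : ∀ a : A, (((c : ℂ) • R.coefFn w) (star a * a)) = ((c * ‖R.ρ a w‖ ^ 2 : ℝ) : ℂ) := by
    intro a
    rw [happ, R.coefFn_mul_self]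
    push_cast
    ring
  refine ⟨?_, ?_, ?_⟩
  · intro a
    exact ⟨c * ‖R.ρ a w‖ ^ 2, by positivity, hsq a⟩
  · intro b
    refine ⟨‖R.ρ b‖ ^ 2, fun a => ?_⟩
    have h1 : star a * star b * b * a = star (b * a) * (b * a) := by
      rw [star_mul]; noncomm_ring
    rw [h1, hsq, hsq]
    have h2 : ‖R.ρ (b * a) w‖ ≤ ‖R.ρ b‖ * ‖R.ρ a w‖ := by
      rw [R.mul_apply, ContinuousLinearMap.comp_apply]
      exact (R.ρ b).le_opNorm _
    rw [Complex.ofReal_re, Complex.ofReal_re]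
    have h6 : ‖R.ρ (b*a) w‖ ^ 2 ≤ (‖R.ρ b‖ * ‖R.ρ a w‖) ^ 2 :=
      pow_le_pow_left₀ (norm_nonneg _) h2 2
    calc c * ‖R.ρ (b*a) w‖ ^ 2 ≤ c * (‖R.ρ b‖ * ‖R.ρ a w‖) ^ 2 :=
          mul_le_mul_of_nonneg_left h6 hc0.le
      _ = ‖R.ρ b‖ ^ 2 * (c * ‖R.ρ a w‖ ^ 2) := by ring
  · have hidem : ∀ e : A, e * e = e → star e = e →
        (((c : ℂ) • R.coefFn w) e).re = c * ‖R.ρ e w‖ ^ 2 := by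
      intro e he hse
      have h9 : star e * e = e := by rw [hse, he]
      conv_lhs => rw [← h9]
      rw [hsq, Complex.ofReal_re]
    constructor
    · rintro x ⟨e, he, hse, rfl⟩
      rw [hidem e he hse]
      have h2 : ‖R.ρ e w‖ ≤ ‖w‖ := R.norm_rho_idem_le he hse w
      have h10 : c * ‖w‖ ^ 2 = 1 := by rw [hc]; exact inv_mul_cancel₀ (by positivity)
      have h11 : ‖R.ρ e w‖ ^ 2 ≤ ‖w‖ ^ 2 := pow_le_pow_left₀ (norm_nonneg _) h2 2
      nlinarith [mul_le_mul_of_nonneg_left h11 hc0.le]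
    · intro b hb
      by_contra hb1
      push_neg at hb1
      have hKpos : (0:ℝ) < 2 * c * ‖w‖ + 1 := by positivity
      set ε : ℝ := min ‖w‖ ((1 - b) / (2 * c * ‖w‖ + 1)) with hε
      have hε0 : 0 < ε := lt_min hw0 (div_pos (by linarith) hKpos)
      obtain ⟨e, he, hse, hee⟩ := R.exists_approx_idem hA w hε0
      have hx : c * ‖R.ρ e w‖ ^ 2 ≤ b := hb ⟨e, he, hse, hidem e he hse⟩
      have h6 : ‖w‖ - ε ≤ ‖R.ρ e w‖ := by
        have := norm_sub_norm_le (R.ρ e w) w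
        rw [norm_sub_rev] at hee
        have h7 := norm_sub_norm_le w (R.ρ e w)
        linarith
      have hεw : ε ≤ ‖w‖ := min_le_left _ _
      have hεb : ε * (2 * c * ‖w‖ + 1) ≤ 1 - b := by
        have := min_le_right ‖w‖ ((1 - b) / (2 * c * ‖w‖ + 1))
        calc ε * (2 * c * ‖w‖ + 1) ≤ (1 - b) / (2 * c * ‖w‖ + 1) * (2 * c * ‖w‖ + 1) := by
              apply mul_le_mul_of_nonneg_right this (le_of_lt hKpos)
          _ = 1 - b := by field_simp
      have hcw : c * ‖w‖ ^ 2 = 1 := by rw [hc]; exact inv_mul_cancel₀ (by positivity)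
      have h8 : (‖w‖ - ε) ^ 2 ≤ ‖R.ρ e w‖ ^ 2 := by nlinarith
      nlinarith

/-- `cfc f T` lies in the elemental star algebra generated by a star-normal `T`. -/
lemma cfc_mem_elemental [CompleteSpace V] (T : V →L[ℂ] V) [hT : IsStarNormal T] (f : ℂ → ℂ) :
    cfc f T ∈ StarAlgebra.elemental ℂ T := by
  by_cases hf : ContinuousOn f (spectrum ℂ T)
  · rw [cfc_apply f T hT hf, cfcHom_eq_of_isStarNormal]
    simp only [StarAlgHom.comp_apply, StarAlgHom.coe_coe, StarSubalgebra.coe_subtype]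
    exact SetLike.coe_mem _
  · rw [cfc_apply_of_not_continuousOn T hf]
    exact zero_mem _

lemma isClosed_centralizer_set (s : Set (V →L[ℂ] V)) :
    IsClosed {x : V →L[ℂ] V | ∀ m ∈ s, m * x = x * m} := by
  have : {x : V →L[ℂ] V | ∀ m ∈ s, m * x = x * m} = ⋂ m ∈ s, {x | m * x = x * m} := by
    ext x; simp
  rw [this]
  refine isClosed_biInter fun m _ => isClosed_eq ?_ ?_
  · exact (continuous_const.mul continuous_id)
  · exact (continuous_id.mul continuous_const)

theorem schur [CompleteSpace V] (hirr : R.Irreducible) (T : V →L[ℂ] V)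
    (hsa : IsSelfAdjoint T) (hcomm : ∀ c : A, (R.ρ c) * T = T * (R.ρ c)) :
    ∃ μ : ℂ, T = μ • (1 : V →L[ℂ] V) := by
  obtain ⟨v₀, hv₀⟩ := hirr.1
  haveI : Nontrivial V := ⟨v₀, 0, hv₀⟩
  haveI : Nontrivial (V →L[ℂ] V) := ⟨1, 0, fun h => hv₀ (by
    have := ContinuousLinearMap.ext_iff.mp h v₀
    simpa using this)⟩
  haveI hT : IsStarNormal T := hsa.isStarNormal
  -- star of ρ c is ρ (star c)
  have hstar : ∀ c : A, star (R.ρ c) = R.ρ (star c) := by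
    intro c
    rw [ContinuousLinearMap.star_eq_adjoint]
    exact ((ContinuousLinearMap.eq_adjoint_iff (R.ρ (star c)) (R.ρ c)).mpr
      (fun x y => by rw [R.star_apply, star_star])).symm
  -- T lies in the centralizer of the range of ρ
  set s : Set (V →L[ℂ] V) := Set.range (fun c : A => R.ρ c) with hs
  have hTmem : T ∈ StarSubalgebra.centralizer ℂ s := by
    rw [StarSubalgebra.mem_centralizer_iff]
    rintro g ⟨c, rfl⟩
    exact ⟨hcomm c, by rw [hstar c]; exact hcomm (star c)⟩
  have hcentclosed : IsClosed ((StarSubalgebra.centralizer ℂ s : StarSubalgebra ℂ (V →L[ℂ] V)) :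
      Set (V →L[ℂ] V)) := by
    rw [StarSubalgebra.coe_centralizer]
    have : ((s ∪ star s).centralizer : Set (V →L[ℂ] V))
        = {x : V →L[ℂ] V | ∀ m ∈ s ∪ star s, m * x = x * m} := by
      ext x; exact Set.mem_centralizer_iff
    rw [this]
    exact isClosed_centralizer_set _
  have hcfc_comm : ∀ f : ℂ → ℂ, ∀ c : A, (R.ρ c) * cfc f T = cfc f T * (R.ρ c) := by
    intro f c
    have h1 : cfc f T ∈ StarSubalgebra.centralizer ℂ s :=
      StarAlgebra.elemental.le_of_mem hcentclosed hTmem (cfc_mem_elemental T f)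
    rw [StarSubalgebra.mem_centralizer_iff] at h1
    exact (h1 (R.ρ c) ⟨c, rfl⟩).1
  -- the spectrum is a subsingleton
  have hsub : ∀ lam mu : ℂ, lam ∈ spectrum ℂ T → mu ∈ spectrum ℂ T → lam = mu := by
    intro lam mu hlam hmu
    by_contra hne
    set δ : ℝ := dist lam mu / 2 with hδdef
    have hδ : 0 < δ := by
      have := dist_pos.mpr hne
      positivity
    set f : ℂ → ℂ := fun x => ((max 0 (δ - dist x lam) : ℝ) : ℂ) with hfdef
    set g : ℂ → ℂ := fun x => ((max 0 (δ - dist x mu) : ℝ) : ℂ) with hgdef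
    have hfc : Continuous f := Complex.continuous_ofReal.comp
      (continuous_const.max (continuous_const.sub (continuous_id.dist continuous_const)))
    have hgc : Continuous g := Complex.continuous_ofReal.comp
      (continuous_const.max (continuous_const.sub (continuous_id.dist continuous_const)))
    have hfg : ∀ x, g x * f x = 0 := by
      intro x
      rcases le_or_gt δ (dist x lam) with h | h
      · have : f x = 0 := by
          show ((max 0 (δ - dist x lam) : ℝ) : ℂ) = 0
          rw [max_eq_left (by linarith : δ - dist x lam ≤ 0)]
          norm_num
        rw [this, mul_zero]
      · have hge : δ ≤ dist x mu := by
          have htri := dist_triangle lam x mu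
          rw [dist_comm lam x] at htri
          have : dist lam mu = 2 * δ := by rw [hδdef]; ring
          linarith
        have : g x = 0 := by
          show ((max 0 (δ - dist x mu) : ℝ) : ℂ) = 0
          rw [max_eq_left (by linarith : δ - dist x mu ≤ 0)]
          norm_num
        rw [this, zero_mul]
    set F := cfc f T with hF
    set G := cfc g T with hG
    have hGF : G * F = 0 := by
      rw [hF, hG, ← cfc_mul g f T (by fun_prop) (by fun_prop)]
      have : (fun x => g x * f x) = (0 : ℂ → ℂ) := funext hfg
      rw [this, cfc_zero]
    have hFval : f lam = (δ : ℂ) := by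
      show ((max 0 (δ - dist lam lam) : ℝ) : ℂ) = (δ : ℂ)
      rw [dist_self, sub_zero, max_eq_right hδ.le]
    have hGval : g mu = (δ : ℂ) := by
      show ((max 0 (δ - dist mu mu) : ℝ) : ℂ) = (δ : ℂ)
      rw [dist_self, sub_zero, max_eq_right hδ.le]
    have hδC : ((δ : ℝ) : ℂ) ≠ 0 := by exact_mod_cast ne_of_gt hδ
    have hF0 : F ≠ 0 := by
      intro h0
      have hmap : spectrum ℂ F = f '' spectrum ℂ T := cfc_map_spectrum f T hT (by fun_prop)
      have : (δ : ℂ) ∈ spectrum ℂ F := by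
        rw [hmap]; exact ⟨lam, hlam, hFval⟩
      rw [h0, spectrum.zero_eq] at this
      exact hδC this
    have hG0 : G ≠ 0 := by
      intro h0
      have hmap : spectrum ℂ G = g '' spectrum ℂ T := cfc_map_spectrum g T hT (by fun_prop)
      have : (δ : ℂ) ∈ spectrum ℂ G := by
        rw [hmap]; exact ⟨mu, hmu, hGval⟩
      rw [h0, spectrum.zero_eq] at this
      exact hδC this
    -- the closure of the range of F is a nontrivial invariant subspace
    set W : Submodule ℂ V := (LinearMap.range (F : V →ₗ[ℂ] V)).topologicalClosure with hW
    have hWc : IsClosed (W : Set V) := Submodule.isClosed_topologicalClosure _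
    have hWinv : ∀ c : A, ∀ x ∈ W, R.ρ c x ∈ W := by
      intro c x hx
      have himg : (R.ρ c) '' (LinearMap.range (F : V →ₗ[ℂ] V) : Set V)
          ⊆ (LinearMap.range (F : V →ₗ[ℂ] V) : Set V) := by
        rintro _ ⟨_, ⟨z, rfl⟩, rfl⟩
        refine ⟨R.ρ c z, ?_⟩
        have := ContinuousLinearMap.ext_iff.mp (hcfc_comm f c) z
        simpa using this.symm
      have hx' : x ∈ closure (LinearMap.range (F : V →ₗ[ℂ] V) : Set V) := hx
      have := image_closure_subset_closure_image (s := (LinearMap.range (F : V →ₗ[ℂ] V) : Set V))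
        (R.ρ c).continuous (Set.mem_image_of_mem _ hx')
      exact closure_mono himg this
    rcases hirr.2 W hWc hWinv with hbot | htop
    · apply hF0
      ext z
      have : F z ∈ W := Submodule.le_topologicalClosure _ ⟨z, rfl⟩
      rw [hbot] at this
      simpa using this
    · apply hG0
      have hdense : Dense (LinearMap.range (F : V →ₗ[ℂ] V) : Set V) := by
        rw [Submodule.dense_iff_topologicalClosure_eq_top]
        exact htop
      have : (fun y => G y) = fun _ => (0 : V) := by
        refine Continuous.ext_on hdense G.continuous continuous_const ?_
        rintro _ ⟨z, rfl⟩
        have := ContinuousLinearMap.ext_iff.mp hGF z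
        simpa using this
      ext z
      have := congrFun this z
      simpa using this
  obtain ⟨lam, hlam⟩ := spectrum.nonempty T
  refine ⟨lam, ?_⟩
  have h1 : T = cfc (id : ℂ → ℂ) T := (cfc_id ℂ T hT).symm
  have h2 : cfc (id : ℂ → ℂ) T = cfc (fun _ => lam) T := by
    apply cfc_congr
    intro x hx
    exact hsub x lam hx hlam
  rw [h1, h2, cfc_const lam T hT, Algebra.algebraMap_eq_smul_one]

theorem pure_to_irred
    (hA : IsIdempotented A) [CompleteSpace V]
    (v : V) (hv : ‖v‖ = 1)
    (hcyc : Dense (Set.range fun a : A => R.ρ a v))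
    (h : ∀ ψ ψ' : A →ₗ[ℂ] ℂ, IsState ψ → IsState ψ' → ∀ t : ℝ, 0 < t → t < 1 →
        (∀ a : A, R.coefFn v a = (t : ℂ) * ψ a + (1 - (t : ℂ)) * ψ' a) →
        ψ = R.coefFn v ∧ ψ' = R.coefFn v) :
    R.Irreducible := by
  have hv0 : v ≠ 0 := fun h0 => by rw [h0, norm_zero] at hv; exact one_ne_zero hv.symm
  constructor
  · exact ⟨v, hv0⟩
  intro W hWc hWinv
  by_contra hcon
  push_neg at hcon
  obtain ⟨hWbot, hWtop⟩ := hcon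
  haveI : CompleteSpace W := hWc.completeSpace_coe
  set w : V := (W.orthogonalProjectionOnto v : V) with hwdef
  set w' : V := v - w with hw'def
  have hwW : w ∈ W := (W.orthogonalProjectionOnto v).2
  have hw'W : w' ∈ Wᗮ := W.sub_starProjection_mem_orthogonal v
  have hv_sum : v = w + w' := by rw [hw'def]; abel
  have hWperp_inv : ∀ (a : A), ∀ x ∈ Wᗮ, R.ρ a x ∈ Wᗮ := by
    intro a x hx
    rw [Submodule.mem_orthogonal]
    intro u hu
    rw [R.rho_inner]
    exact Submodule.inner_right_of_mem_orthogonal (hWinv (star a) u hu) hx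
  have hrange_top : ∀ (U : Submodule ℂ V), IsClosed (U : Set V) →
      (∀ a : A, ∀ x ∈ U, R.ρ a x ∈ U) → v ∈ U → U = ⊤ := by
    intro U hUc hUinv hvU
    rw [Submodule.eq_top_iff']
    intro x
    have hsub : Set.range (fun a : A => R.ρ a v) ⊆ (U : Set V) := by
      rintro _ ⟨a, rfl⟩; exact hUinv a v hvU
    have hx : x ∈ closure (Set.range fun a : A => R.ρ a v) := hcyc x
    exact hUc.closure_subset_iff.mpr hsub hx
  have hw0 : w ≠ 0 := by
    intro h0
    have hvW' : v ∈ Wᗮ := by rw [hv_sum, h0, zero_add]; exact hw'W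
    have htop := hrange_top Wᗮ (Submodule.isClosed_orthogonal W) hWperp_inv hvW'
    apply hWbot
    rw [← Submodule.orthogonal_orthogonal W, htop, Submodule.top_orthogonal_eq_bot]
  have hw'0 : w' ≠ 0 := by
    intro h0
    have hvW : v ∈ W := by rw [hv_sum, h0, add_zero]; exact hwW
    exact hWtop (hrange_top W hWc hWinv hvW)
  set c : ℝ := ‖w‖ ^ 2 with hcdef
  have hc0 : 0 < c := pow_pos (norm_pos_iff.mpr hw0) 2
  have horth : ⟪w, w'⟫ = 0 := Submodule.inner_right_of_mem_orthogonal hwW hw'W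
  have hpyth : c + ‖w'‖ ^ 2 = 1 := by
    have hn := norm_add_sq (𝕜 := ℂ) w w'
    rw [← hv_sum, hv, horth] at hn
    simp at hn
    linarith
  have hw'c : (‖w'‖ ^ 2 : ℝ) = 1 - c := by linarith
  have hc1 : c < 1 := by
    have : (0:ℝ) < ‖w'‖ ^ 2 := pow_pos (norm_pos_iff.mpr hw'0) 2
    linarith
  set ψ : A →ₗ[ℂ] ℂ := (((c⁻¹ : ℝ) : ℂ)) • R.coefFn w with hψdef
  set ψ' : A →ₗ[ℂ] ℂ := ((((1 - c)⁻¹ : ℝ) : ℂ)) • R.coefFn w' with hψ'def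
  have hSψ : IsState ψ := by rw [hψdef, hcdef]; exact R.isState_coef hA w hw0
  have hSψ' : IsState ψ' := by
    rw [hψ'def, ← hw'c]; exact R.isState_coef hA w' hw'0
  have hρw : ∀ a : A, R.ρ a w ∈ W := fun a => hWinv a w hwW
  have hρw' : ∀ a : A, R.ρ a w' ∈ Wᗮ := fun a => hWperp_inv a w' hw'W
  have hcross : ∀ a : A, ⟪v, R.ρ a v⟫ = ⟪w, R.ρ a w⟫ + ⟪w', R.ρ a w'⟫ := by
    intro a
    have e1 : ⟪w, R.ρ a w'⟫ = 0 := Submodule.inner_right_of_mem_orthogonal hwW (hρw' a)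
    have e2 : ⟪w', R.ρ a w⟫ = 0 := Submodule.inner_left_of_mem_orthogonal (hρw a) hw'W
    calc ⟪v, R.ρ a v⟫ = ⟪w + w', R.ρ a w + R.ρ a w'⟫ := by rw [← map_add, ← hv_sum]
      _ = ⟪w, R.ρ a w⟫ + ⟪w, R.ρ a w'⟫ + (⟪w', R.ρ a w⟫ + ⟪w', R.ρ a w'⟫) := by
          rw [inner_add_left, inner_add_right, inner_add_right]
      _ = ⟪w, R.ρ a w⟫ + ⟪w', R.ρ a w'⟫ := by rw [e1, e2]; ring
  have hcomb : ∀ a : A, R.coefFn v a = (c : ℂ) * ψ a + (1 - (c : ℂ)) * ψ' a := by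
    intro a
    have hψa : ψ a = ((c⁻¹ : ℝ) : ℂ) * ⟪w, R.ρ a w⟫ := rfl
    have hψ'a : ψ' a = (((1 - c)⁻¹ : ℝ) : ℂ) * ⟪w', R.ρ a w'⟫ := rfl
    rw [R.coefFn_apply, hcross, hψa, hψ'a]
    have hcne : (c : ℂ) ≠ 0 := by exact_mod_cast ne_of_gt hc0
    have h1cne : ((1 - c : ℝ) : ℂ) ≠ 0 := by
      exact_mod_cast ne_of_gt (by linarith : (0:ℝ) < 1 - c)
    have h1c : (1 - (c : ℂ)) = ((1 - c : ℝ) : ℂ) := by push_cast; ring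
    have k1 : (c : ℂ) * (((c⁻¹ : ℝ) : ℂ) * ⟪w, R.ρ a w⟫) = ⟪w, R.ρ a w⟫ := by
      rw [← mul_assoc, ← Complex.ofReal_mul, mul_inv_cancel₀ (ne_of_gt hc0),
        Complex.ofReal_one, one_mul]
    have k2 : ((1 - c : ℝ) : ℂ) * ((((1 - c)⁻¹ : ℝ) : ℂ) * ⟪w', R.ρ a w'⟫)
        = ⟪w', R.ρ a w'⟫ := by
      rw [← mul_assoc, ← Complex.ofReal_mul,
        mul_inv_cancel₀ (ne_of_gt (by linarith : (0:ℝ) < 1 - c)),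
        Complex.ofReal_one, one_mul]
    rw [h1c, k1, k2]
  obtain ⟨hψeq, -⟩ := h ψ ψ' hSψ hSψ' c hc0 hc1 hcomb
  -- now derive the contradiction
  obtain ⟨b, hbmem, hblim⟩ := mem_closure_iff_seq_limit.mp (hcyc w)
  choose aa haa0 using hbmem
  have haa : ∀ n, R.ρ (aa n) v = b n := haa0
  have hkey : ∀ n, ((c⁻¹ : ℝ) : ℂ) * ⟪w, b n⟫ = ⟪v, b n⟫ := by
    intro n
    have h1 : ψ (aa n) = R.coefFn v (aa n) := by rw [hψeq]
    have h2 : ⟪w, R.ρ (aa n) w⟫ = ⟪w, b n⟫ := by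
      have e1 : ⟪w, R.ρ (aa n) w'⟫ = 0 :=
        Submodule.inner_right_of_mem_orthogonal hwW (hρw' (aa n))
      have : ⟪w, R.ρ (aa n) v⟫ = ⟪w, R.ρ (aa n) w⟫ + ⟪w, R.ρ (aa n) w'⟫ := by
        rw [← inner_add_right, ← map_add, ← hv_sum]
      rw [haa n] at this
      rw [this, e1, add_zero]
    have h3 : ψ (aa n) = ((c⁻¹ : ℝ) : ℂ) * ⟪w, b n⟫ := by
      show ((c⁻¹ : ℝ) : ℂ) * ⟪w, R.ρ (aa n) w⟫ = _
      rw [h2]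
    have h4 : R.coefFn v (aa n) = ⟪v, b n⟫ := by rw [R.coefFn_apply, haa n]
    rw [← h3, h1, h4]
  have lim1 : Filter.Tendsto (fun n => ((c⁻¹ : ℝ) : ℂ) * ⟪w, b n⟫)
      Filter.atTop (nhds (((c⁻¹ : ℝ) : ℂ) * ⟪w, w⟫)) :=
    (Filter.Tendsto.inner tendsto_const_nhds hblim).const_mul _
  have lim2 : Filter.Tendsto (fun n => ⟪v, b n⟫) Filter.atTop (nhds ⟪v, w⟫) :=
    Filter.Tendsto.inner tendsto_const_nhds hblim
  have heq : ((c⁻¹ : ℝ) : ℂ) * ⟪w, w⟫ = ⟪v, w⟫ := by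
    apply tendsto_nhds_unique _ lim2
    convert lim1 using 2
    exact (hkey _).symm
  have hww : ⟪w, w⟫ = ((c : ℝ) : ℂ) := by
    rw [inner_self_eq_norm_sq_to_K]; norm_cast
  have hw'w : ⟪w', w⟫ = 0 := by rwa [← inner_eq_zero_symm] at horth
  have hvw : ⟪v, w⟫ = ((c : ℝ) : ℂ) := by
    rw [hv_sum, inner_add_left, hww, hw'w, add_zero]
  rw [hww, hvw] at heq
  have hcne : ((c : ℝ) : ℂ) ≠ 0 := by exact_mod_cast ne_of_gt hc0
  have : ((c⁻¹ : ℝ) : ℂ) * ((c : ℝ) : ℂ) = 1 := by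
    push_cast
    field_simp
  rw [this] at heq
  have : (c : ℝ) = 1 := by exact_mod_cast heq.symm
  linarith

/-- The cyclic-orbit linear map `a ↦ ρ a v`. -/
def cycMap (v : V) : A →ₗ[ℂ] V where
  toFun a := R.ρ a v
  map_add' a b := by simp only [map_add, ContinuousLinearMap.add_apply]
  map_smul' c a := by simp only [map_smul, ContinuousLinearMap.coe_smul',
    Pi.smul_apply, RingHom.id_apply]

theorem exists_scalar [CompleteSpace V] (v : V) (hv : ‖v‖ = 1)
    (hcyc : Dense (Set.range fun a : A => R.ρ a v))
    (hirr : R.Irreducible)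
    (ψ : A →ₗ[ℂ] ℂ)
    (hpos : ∀ a : A, ∃ r : ℝ, 0 ≤ r ∧ ψ (star a * a) = (r : ℂ))
    (C : ℝ) (hC0 : 0 ≤ C)
    (hC : ∀ a : A, (ψ (star a * a)).re ≤ C * ‖R.ρ a v‖ ^ 2) :
    ∃ m : ℝ, 0 ≤ m ∧ ∀ a b : A, ψ (star a * b) = (m : ℂ) * ⟪R.ρ a v, R.ρ b v⟫ := by
  classical
  set θ : A →ₗ[ℂ] V := R.cycMap v with hθ
  have hθap : ∀ a : A, θ a = R.ρ a v := fun a => rfl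
  have hDdense : Dense (Set.range (⇑θ)) := hcyc
  -- bound on the sesquilinear form
  have hbound : ∀ a b : A, ‖ψ (star a * b)‖ ≤ (C * ‖θ a‖) * ‖θ b‖ := by
    intro a b
    have h1 := stateCS ψ hpos a b
    have h2 := hC a
    have h3 := hC b
    have h4 : ‖ψ (star a * b)‖ ^ 2 ≤ (C * ‖θ a‖ * ‖θ b‖) ^ 2 := by
      calc ‖ψ (star a * b)‖ ^ 2 ≤ (ψ (star a * a)).re * (ψ (star b * b)).re := h1
        _ ≤ (C * ‖θ a‖ ^ 2) * (C * ‖θ b‖ ^ 2) := by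
            obtain ⟨r, hr0, hr⟩ := hpos a
            obtain ⟨r', hr0', hr'⟩ := hpos b
            have e1 : (ψ (star a * a)).re = r := by rw [hr, Complex.ofReal_re]
            have e2 : (ψ (star b * b)).re = r' := by rw [hr', Complex.ofReal_re]
            rw [e1, e2]
            rw [e1, ← hθap a] at h2
            rw [e2, ← hθap b] at h3
            exact mul_le_mul h2 h3 hr0' (by positivity)
        _ = (C * ‖θ a‖ * ‖θ b‖) ^ 2 := by ring
    have h5 : (0:ℝ) ≤ C * ‖θ a‖ * ‖θ b‖ := by positivity
    nlinarith [norm_nonneg (ψ (star a * b))]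
  have hker : ∀ b : A, θ b = 0 → ∀ a : A, ψ (star a * b) = 0 := by
    intro b hb a
    have := hbound a b
    rw [hb, norm_zero, mul_zero] at this
    exact norm_le_zero_iff.mp this
  have hkerl : ∀ a : A, θ a = 0 → ∀ b : A, ψ (star a * b) = 0 := by
    intro a ha b
    rw [← stateHerm ψ hpos a b, hker a ha b, map_zero]
  -- a vector orthogonal to the dense range is zero
  have hzero : ∀ z : V, (∀ b : A, ⟪z, θ b⟫ = 0) → z = 0 := by
    intro z hz
    have h1 : (fun y : V => ⟪z, y⟫) = fun _ => (0:ℂ) := by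
      refine Continuous.ext_on hDdense (continuous_const.inner continuous_id) continuous_const ?_
      rintro _ ⟨b, rfl⟩
      exact hz b
    have := congrFun h1 z
    simpa [inner_self_eq_zero] using this
  -- the subspace D = range θ with its inclusion
  set D : Submodule ℂ V := LinearMap.range θ with hD
  have hDR : DenseRange (⇑(D.subtypeL)) := by
    have : Set.range (⇑(D.subtypeL)) = (D : Set V) := Subtype.range_coe
    rw [DenseRange, this]
    have h2 : (D : Set V) = Set.range (⇑θ) := by
      ext x; simp [hD, LinearMap.mem_range, Set.mem_range]
    rw [h2]; exact hDdense
  have hUI : IsUniformInducing (⇑(D.subtypeL)) := isometry_subtype_coe.isUniformInducing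
  -- the quotient equivalence
  set eθ : (A ⧸ LinearMap.ker θ) ≃ₗ[ℂ] D := θ.quotKerEquivRange with heθ
  have heθmk : ∀ b : A, (eθ (Submodule.Quotient.mk b) : V) = θ b :=
    fun b => LinearMap.quotKerEquivRange_apply_mk θ b
  have heθsymm : ∀ (b : A) (x : D), (x : V) = θ b → eθ.symm x = Submodule.Quotient.mk b := by
    intro b x hx
    rw [LinearEquiv.symm_apply_eq]
    apply Subtype.ext
    rw [heθmk b, hx]
  -- the linear functionals ℓ a on D
  have hkerle : ∀ a : A, LinearMap.ker θ ≤ LinearMap.ker (ψ.comp (LinearMap.mulLeft ℂ (star a))) := by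
    intro a b hb
    simp only [LinearMap.mem_ker] at hb ⊢
    exact hker b hb a
  set ℓ₁ : A → (D →ₗ[ℂ] ℂ) := fun a =>
    ((LinearMap.ker θ).liftQ (ψ.comp (LinearMap.mulLeft ℂ (star a))) (hkerle a)).comp
      (eθ.symm : D →ₗ[ℂ] A ⧸ LinearMap.ker θ) with hℓ₁
  have hℓ₁ap : ∀ (a b : A) (x : D), (x : V) = θ b → ℓ₁ a x = ψ (star a * b) := by
    intro a b x hx
    rw [hℓ₁]
    simp only [LinearMap.comp_apply, LinearEquiv.coe_coe]
    rw [heθsymm b x hx, Submodule.liftQ_apply]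
    rfl
  have hℓ₁b : ∀ (a : A) (x : D), ‖ℓ₁ a x‖ ≤ (C * ‖θ a‖) * ‖x‖ := by
    intro a x
    obtain ⟨b, hb⟩ := x.2
    have hx : (x : V) = θ b := hb.symm
    rw [hℓ₁ap a b x hx]
    have : ‖x‖ = ‖θ b‖ := by rw [← hx]; rfl
    rw [this]
    exact hbound a b
  set ℓ : A → (D →L[ℂ] ℂ) := fun a => (ℓ₁ a).mkContinuous (C * ‖θ a‖) (hℓ₁b a) with hℓ
  set Q : A → (V →L[ℂ] ℂ) := fun a => (ℓ a).extend D.subtypeL with hQ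
  have hQap : ∀ a b : A, Q a (θ b) = ψ (star a * b) := by
    intro a b
    have hmem : θ b ∈ D := ⟨b, rfl⟩
    have : Q a (D.subtypeL ⟨θ b, hmem⟩) = ℓ a ⟨θ b, hmem⟩ :=
      ContinuousLinearMap.extend_eq _ hDR hUI _
    rw [hQ]
    simp only at this ⊢
    rw [show (D.subtypeL ⟨θ b, hmem⟩ : V) = θ b from rfl] at this
    rw [this]
    exact hℓ₁ap a b ⟨θ b, hmem⟩ rfl
  -- the vectors u a
  set u : A → V := fun a => (InnerProductSpace.toDual ℂ V).symm (Q a) with hu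
  have huap : ∀ a b : A, ⟪u a, θ b⟫ = ψ (star a * b) := by
    intro a b
    rw [hu]
    rw [InnerProductSpace.toDual_symm_apply]
    exact hQap a b
  have hub : ∀ a : A, ‖u a‖ ≤ C * ‖θ a‖ := by
    intro a
    have h1 : ‖u a‖ = ‖Q a‖ := by
      rw [hu]; exact LinearIsometryEquiv.norm_map _ _
    have h2 : ‖Q a‖ ≤ (1 : NNReal) * ‖ℓ a‖ := by
      rw [hQ]
      apply ContinuousLinearMap.opNorm_extend_le _ hDR
      intro x
      rw [NNReal.coe_one, one_mul]
      rfl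
    have h3 : ‖ℓ a‖ ≤ C * ‖θ a‖ :=
      (ℓ₁ a).mkContinuous_norm_le (by positivity) (hℓ₁b a)
    rw [h1]
    calc ‖Q a‖ ≤ (1 : NNReal) * ‖ℓ a‖ := h2
      _ = ‖ℓ a‖ := by rw [NNReal.coe_one, one_mul]
      _ ≤ C * ‖θ a‖ := h3
  -- u is linear and vanishes on ker θ
  have hulin : ∀ (c : ℂ) (a a' : A), u (c • a + a') = c • u a + u a' := by
    intro c a a'
    apply sub_eq_zero.mp
    apply hzero
    intro b
    rw [inner_sub_left, huap]
    rw [inner_add_left, inner_smul_left, huap, huap]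
    rw [star_add, star_smul, add_mul, smul_mul_assoc, map_add, map_smul]
    simp only [smul_eq_mul, Complex.star_def]
    ring
  have hukill : ∀ a : A, θ a = 0 → u a = 0 := by
    intro a ha
    apply hzero
    intro b
    rw [huap, hkerl a ha b]
  -- build the operator T
  have hulinmap : ∃ ulm : A →ₗ[ℂ] V, ∀ a, ulm a = u a := by
    refine ⟨{ toFun := u
              map_add' := fun a a' => ?_
              map_smul' := fun c a => ?_ }, fun a => rfl⟩
    · have := hulin 1 a a'
      simpa using this
    · have := hulin c a 0
      have h0 : u 0 = 0 := hukill 0 (map_zero θ)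
      simp only [add_zero, h0] at this
      simpa using this
  obtain ⟨ulm, hulm⟩ := hulinmap
  have hkerleu : LinearMap.ker θ ≤ LinearMap.ker ulm := by
    intro a ha
    simp only [LinearMap.mem_ker] at ha ⊢
    rw [hulm]
    exact hukill a ha
  set T₁ : D →ₗ[ℂ] V :=
    ((LinearMap.ker θ).liftQ ulm hkerleu).comp
      (eθ.symm : D →ₗ[ℂ] A ⧸ LinearMap.ker θ) with hT₁
  have hT₁ap : ∀ (b : A) (x : D), (x : V) = θ b → T₁ x = u b := by
    intro b x hx
    rw [hT₁]
    simp only [LinearMap.comp_apply, LinearEquiv.coe_coe]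
    rw [heθsymm b x hx, Submodule.liftQ_apply, hulm]
  have hT₁b : ∀ x : D, ‖T₁ x‖ ≤ C * ‖x‖ := by
    intro x
    obtain ⟨b, hb⟩ := x.2
    have hx : (x : V) = θ b := hb.symm
    rw [hT₁ap b x hx]
    have : ‖x‖ = ‖θ b‖ := by rw [← hx]; rfl
    rw [this]
    exact hub b
  set T₂ : D →L[ℂ] V := T₁.mkContinuous C hT₁b with hT₂
  set T : V →L[ℂ] V := T₂.extend D.subtypeL with hT
  have hTap : ∀ b : A, T (θ b) = u b := by
    intro b
    have hmem : θ b ∈ D := ⟨b, rfl⟩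
    have : T (D.subtypeL ⟨θ b, hmem⟩) = T₂ ⟨θ b, hmem⟩ :=
      ContinuousLinearMap.extend_eq _ hDR hUI _
    rw [show (D.subtypeL ⟨θ b, hmem⟩ : V) = θ b from rfl] at this
    rw [this]
    exact hT₁ap b ⟨θ b, hmem⟩ rfl
  -- self-adjointness
  have hsa0 : ∀ b b' : A, ⟪T (θ b), θ b'⟫ = ⟪θ b, T (θ b')⟫ := by
    intro b b'
    rw [hTap, hTap, huap]
    rw [← inner_conj_symm (θ b) (u b'), huap]
    exact (stateHerm ψ hpos b b').symm
  have hsa1 : ∀ (x : V) (b' : A), ⟪T x, θ b'⟫ = ⟪x, T (θ b')⟫ := by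
    intro x b'
    have h1 : (fun x : V => ⟪T x, θ b'⟫) = fun x : V => ⟪x, T (θ b')⟫ := by
      refine Continuous.ext_on hDdense ?_ ?_ ?_
      · exact (T.continuous.inner continuous_const)
      · exact (continuous_id.inner continuous_const)
      · rintro _ ⟨b, rfl⟩
        exact hsa0 b b'
    exact congrFun h1 x
  have hsa : ∀ x y : V, ⟪T x, y⟫ = ⟪x, T y⟫ := by
    intro x y
    have h1 : (fun y : V => ⟪T x, y⟫) = fun y : V => ⟪x, T y⟫ := by
      refine Continuous.ext_on hDdense ?_ ?_ ?_
      · exact (continuous_const.inner continuous_id)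
      · exact (continuous_const.inner T.continuous)
      · rintro _ ⟨b, rfl⟩
        exact hsa1 x b
    exact congrFun h1 y
  have hTsa : IsSelfAdjoint T := by
    rw [IsSelfAdjoint, ContinuousLinearMap.star_eq_adjoint]
    exact ((ContinuousLinearMap.eq_adjoint_iff T T).mpr hsa).symm
  -- commutation
  have hcomm0 : ∀ (c b : A), T (R.ρ c (θ b)) = R.ρ c (T (θ b)) := by
    intro c b
    have h1 : R.ρ c (θ b) = θ (c * b) := by
      rw [hθap, hθap, R.mul_apply]; rfl
    rw [h1, hTap, hTap]
    apply sub_eq_zero.mp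
    apply hzero
    intro d
    rw [inner_sub_left, huap]
    have h2 : ⟪R.ρ c (u b), θ d⟫ = ⟪u b, θ (star c * d)⟫ := by
      rw [R.star_apply]
      congr 1
      rw [hθap, hθap, R.mul_apply]; rfl
    rw [h2, huap]
    rw [star_mul, mul_assoc]
    ring
  have hcomm : ∀ c : A, (R.ρ c) * T = T * (R.ρ c) := by
    intro c
    ext x
    have h1 : (fun x : V => T (R.ρ c x)) = fun x : V => R.ρ c (T x) := by
      refine Continuous.ext_on hDdense ?_ ?_ ?_
      · exact T.continuous.comp (R.ρ c).continuous
      · exact (R.ρ c).continuous.comp T.continuous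
      · rintro _ ⟨b, rfl⟩
        exact hcomm0 c b
    have := congrFun h1 x
    simp only [ContinuousLinearMap.mul_apply]
    exact this.symm
  -- Schur
  obtain ⟨μ, hμ⟩ := R.schur hirr T hTsa hcomm
  have hval : ∀ a b : A, ψ (star a * b) = (starRingEnd ℂ) μ * ⟪θ a, θ b⟫ := by
    intro a b
    rw [← huap, ← hTap, hμ]
    simp only [ContinuousLinearMap.smul_apply, ContinuousLinearMap.one_apply]
    rw [inner_smul_left]
  -- there is a with θ a ≠ 0
  have hvne : v ≠ 0 := fun h0 => by rw [h0, norm_zero] at hv; exact one_ne_zero hv.symm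
  have hane : ∃ a : A, θ a ≠ 0 := by
    by_contra hall
    push_neg at hall
    apply hvne
    have h1 : Set.range (⇑θ) = {0} := by
      apply Set.eq_singleton_iff_unique_mem.mpr
      exact ⟨⟨0, map_zero θ⟩, by rintro _ ⟨a, rfl⟩; exact hall a⟩
    have h2 := hDdense v
    rw [h1] at h2
    simpa using h2
  obtain ⟨a₀, ha₀⟩ := hane
  obtain ⟨r, hr0, hr⟩ := hpos a₀
  have hθn : (0:ℝ) < ‖θ a₀‖ ^ 2 := pow_pos (norm_pos_iff.mpr ha₀) 2
  have hconj : (starRingEnd ℂ) μ = ((r / ‖θ a₀‖ ^ 2 : ℝ) : ℂ) := by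
    have h1 := hval a₀ a₀
    rw [hr, inner_self_eq_norm_sq_to_K] at h1
    have h2 : ((‖θ a₀‖ : ℂ)) ≠ 0 := by
      exact_mod_cast (norm_pos_iff.mpr ha₀).ne'
    have h3 : (starRingEnd ℂ) μ = (r : ℂ) / ((‖θ a₀‖ : ℂ)) ^ 2 := by
      rw [h1]; field_simp; rfl
    rw [h3]
    push_cast
    ring
  refine ⟨r / ‖θ a₀‖ ^ 2, by positivity, ?_⟩
  intro a b
  rw [hval a b, hconj]
  rfl

theorem irred_to_pure (hA : IsIdempotented A) [CompleteSpace V]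
    (v : V) (hv : ‖v‖ = 1)
    (hcyc : Dense (Set.range fun a : A => R.ρ a v))
    (hirr : R.Irreducible)
    (ψ ψ' : A →ₗ[ℂ] ℂ) (hψ : IsState ψ) (hψ' : IsState ψ')
    (t : ℝ) (ht0 : 0 < t) (ht1 : t < 1)
    (hcomb : ∀ a : A, R.coefFn v a = (t : ℂ) * ψ a + (1 - (t : ℂ)) * ψ' a) :
    ψ = R.coefFn v ∧ ψ' = R.coefFn v := by
  classical
  have hψpos := hψ.1
  have hψ'pos := hψ'.1
  -- the domination bound
  have hC : ∀ a : A, (ψ (star a * a)).re ≤ t⁻¹ * ‖R.ρ a v‖ ^ 2 := by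
    intro a
    have h1 := hcomb (star a * a)
    obtain ⟨r, hr0, hr⟩ := hψpos a
    obtain ⟨r', hr0', hr'⟩ := hψ'pos a
    rw [R.coefFn_mul_self, hr, hr'] at h1
    have h2 : (‖R.ρ a v‖ ^ 2 : ℝ) = t * r + (1 - t) * r' := by
      exact_mod_cast h1
    have h3 : t * r ≤ ‖R.ρ a v‖ ^ 2 := by nlinarith
    have h4 : (ψ (star a * a)).re = r := by rw [hr, Complex.ofReal_re]
    rw [h4]
    rw [← sub_nonneg] at h3 ⊢
    have ht0' : 0 < t⁻¹ := by positivity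
    calc (0:ℝ) ≤ t⁻¹ * (‖R.ρ a v‖ ^ 2 - t * r) := by positivity
      _ = t⁻¹ * ‖R.ρ a v‖ ^ 2 - r := by field_simp
  obtain ⟨m, hm0, hm⟩ := R.exists_scalar v hv hcyc hirr ψ hψpos t⁻¹ (by positivity) hC
  -- ψ = m • coefFn v on all elements
  have hall : ∀ c : A, ψ c = (m : ℂ) * R.coefFn v c := by
    intro c
    obtain ⟨e, he, hse, hfix⟩ := hA {c}
    have h1 : e * (c * e) = c := by
      rw [← mul_assoc]; exact hfix c (by simp)
    have h2 : star e * (c * e) = c := by rw [hse]; exact h1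
    calc ψ c = ψ (star e * (c * e)) := by rw [h2]
      _ = (m : ℂ) * ⟪R.ρ e v, R.ρ (c * e) v⟫ := hm e (c * e)
      _ = (m : ℂ) * R.coefFn v (star e * (c * e)) := by rw [R.coefFn_mul_star]
      _ = (m : ℂ) * R.coefFn v c := by rw [h2]
  -- the state φ = coefFn v
  have hSφ : IsState (R.coefFn v) := by
    have h1 := R.isState_coef hA v (fun h0 => by rw [h0, norm_zero] at hv; exact one_ne_zero hv.symm)
    have h2 : ((((‖v‖ ^ 2)⁻¹ : ℝ)) : ℂ) • R.coefFn v = R.coefFn v := by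
      rw [hv]; norm_num
    rwa [h2] at h1
  -- compare the LUBs to get m = 1
  have hre : ∀ c : A, (ψ c).re = m * (R.coefFn v c).re := by
    intro c
    rw [hall c]
    simp [Complex.mul_re]
  have hsets : {x : ℝ | ∃ e : A, e * e = e ∧ star e = e ∧ (ψ e).re = x}
      = (fun x => m * x) '' {x : ℝ | ∃ e : A, e * e = e ∧ star e = e ∧ ((R.coefFn v) e).re = x} := by
    ext y
    constructor
    · rintro ⟨e, he, hse, rfl⟩
      exact ⟨(R.coefFn v e).re, ⟨e, he, hse, rfl⟩, (hre e).symm⟩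
    · rintro ⟨x, ⟨e, he, hse, rfl⟩, rfl⟩
      exact ⟨e, he, hse, hre e⟩
  have hφlub := hSφ.2.2
  have hψlub := hψ.2.2
  have hm1 : m = 1 := by
    rcases eq_or_lt_of_le hm0 with h0 | h0
    · exfalso
      have hub : (0:ℝ) ∈ upperBounds {x : ℝ | ∃ e : A, e * e = e ∧ star e = e ∧ (ψ e).re = x} := by
        rintro y ⟨e, he, hse, rfl⟩
        rw [hre e, ← h0, zero_mul]
      have := hψlub.2 hub
      linarith
    · have hscale : IsLUB ((fun x => m * x) ''
          {x : ℝ | ∃ e : A, e * e = e ∧ star e = e ∧ ((R.coefFn v) e).re = x}) (m * 1) := by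
        constructor
        · rintro _ ⟨x, hx, rfl⟩
          exact mul_le_mul_of_nonneg_left (hφlub.1 hx) hm0
        · intro b hb
          have hub : b / m ∈ upperBounds
              {x : ℝ | ∃ e : A, e * e = e ∧ star e = e ∧ ((R.coefFn v) e).re = x} := by
            intro x hx
            have : m * x ≤ b := hb ⟨x, hx, rfl⟩
            rw [le_div_iff₀ h0, mul_comm]
            exact this
          have := hφlub.2 hub
          rw [le_div_iff₀ h0, one_mul] at this
          rw [mul_one]
          linarith [this]
      rw [← hsets] at hscale
      have := IsLUB.unique hψlub hscale
      linarith [this]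
  have hψeq : ψ = R.coefFn v := by
    ext c
    rw [hall c, hm1]
    simp
  refine ⟨hψeq, ?_⟩
  ext c
  have h1 := hcomb c
  rw [hψeq] at h1
  have ht1c : (1 - (t:ℂ)) ≠ 0 := by
    intro h0
    have : (t:ℂ) = 1 := by linear_combination -h0
    have : t = 1 := by exact_mod_cast this
    linarith
  have h2 : (1 - (t:ℂ)) * ψ' c = (1 - (t:ℂ)) * R.coefFn v c := by
    linear_combination -h1
  exact mul_left_cancel₀ ht1c h2

end URep

end AuxiliaryLemmas

/-- For a cyclic unit vector `v`, the state `φ_{V,v}` is *pure* (an extreme point of the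
convex set of states of `A`) if and only if `V` is irreducible. -/
theorem pure_state_iff_irreducible
    {A : Type*} [NonUnitalRing A] [StarRing A] [Module ℂ A]
    [IsScalarTower ℂ A A] [SMulCommClass ℂ A A] [StarModule ℂ A]
    (hA : IsIdempotented A)
    {V : Type*} [NormedAddCommGroup V] [InnerProductSpace ℂ V] [CompleteSpace V]
    (R : URep A V) (v : V) (hv : ‖v‖ = 1)
    (hcyc : Dense (Set.range fun a : A => R.ρ a v)) :
    (∀ ψ ψ' : A →ₗ[ℂ] ℂ, IsState ψ → IsState ψ' → ∀ t : ℝ, 0 < t → t < 1 →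
        (∀ a : A, R.coefFn v a = (t : ℂ) * ψ a + (1 - (t : ℂ)) * ψ' a) →
        ψ = R.coefFn v ∧ ψ' = R.coefFn v) ↔
      R.Irreducible := by
  constructor
  · exact fun h => R.pure_to_irred hA v hv hcyc h
  · intro hirr ψ ψ' hψ hψ' t ht0 ht1 hcomb
    exact R.irred_to_pure hA v hv hcyc hirr ψ ψ' hψ hψ' t ht0 ht1 hcomb
end

section
/- Let A be an idempotented *-algebra, let V be an irreducible unitary representation of A and let V' be a unitary representation of A with V ≺ V'. Then for every unit vector v ∈ V, every ε > 0 and every finite subset F ⊆ A there exists a unit vector v' ∈ V' such that |‖a·v‖ − ‖a·v'‖| < ε for all a ∈ F; moreover, if e ∈ A is a self-adjoint idempotent and v is a unit vector in e·V, then v' can be chosen to be a unit vector in e·V'. In particular, for every a ∈ A the operator norm of the action of a on V is at most the operator norm of the action of a on V'. -/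
local notation "⟪" x ", " y "⟫" => @inner ℂ _ _ x y

private lemma URep.coef_sq {A : Type*} [NonUnitalRing A] [StarRing A] [Module ℂ A]
    {V : Type*} [NormedAddCommGroup V] [InnerProductSpace ℂ V]
    (R : URep A V) (a : A) (v : V) :
    ⟪v, R.ρ (star a * a) v⟫ = ((‖R.ρ a v‖ : ℂ))^2 := by
  rw [R.mul_apply, ContinuousLinearMap.comp_apply, ← R.star_apply a v (R.ρ a v),
    inner_self_eq_norm_sq_to_K]
  norm_cast

private lemma abs_sub_sq_le (x y : ℝ) (hx : 0 ≤ x) (hy : 0 ≤ y) :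
    |x - y|^2 ≤ |x^2 - y^2| := by
  rcases le_total x y with h|h
  · rw [abs_of_nonpos (by linarith), abs_of_nonpos (by nlinarith)]; nlinarith
  · rw [abs_of_nonneg (by linarith), abs_of_nonneg (by nlinarith)]; nlinarith

private lemma norm_coe_sq_sub (x y : ℝ) :
    ‖((x : ℂ))^2 - ((y : ℂ))^2‖ = |x^2 - y^2| := by
  have : ((x^2 - y^2 : ℝ) : ℂ) = ((x:ℂ))^2 - ((y:ℂ))^2 := by push_cast; ring
  rw [← this, Complex.norm_real, Real.norm_eq_abs]

/-- Norm approximation along weak containment: if `R ≺ R'`, the norms `‖a·v‖` of an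
irreducible representation are approximated by norms at unit vectors of `R'` (compatibly
with self-adjoint idempotents), and consequently `‖a|_V‖ ≤ ‖a|_{V'}‖` for all `a ∈ A`. -/
theorem norm_approximation_of_weaklyContained
    {A : Type*} [NonUnitalRing A] [StarRing A] [Module ℂ A]
    [IsScalarTower ℂ A A] [SMulCommClass ℂ A A] [StarModule ℂ A]
    (hA : IsIdempotented A)
    {V : Type*} [NormedAddCommGroup V] [InnerProductSpace ℂ V] [CompleteSpace V]
    {V' : Type*} [NormedAddCommGroup V'] [InnerProductSpace ℂ V'] [CompleteSpace V']
    (R : URep A V) (R' : URep A V') (hirr : R.Irreducible)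
    (hwc : WeaklyContained R R') :
    (∀ v : V, ‖v‖ = 1 → ∀ ε : ℝ, 0 < ε → ∀ F : Finset A, ∃ v' : V', ‖v'‖ = 1 ∧
      ∀ a ∈ F, |‖R.ρ a v‖ - ‖R'.ρ a v'‖| < ε) ∧
    (∀ e : A, e * e = e → star e = e →
      ∀ v : V, ‖v‖ = 1 → (∃ u : V, R.ρ e u = v) →
        ∀ ε : ℝ, 0 < ε → ∀ F : Finset A, ∃ v' : V', ‖v'‖ = 1 ∧ (∃ u' : V', R'.ρ e u' = v') ∧
          ∀ a ∈ F, |‖R.ρ a v‖ - ‖R'.ρ a v'‖| < ε) ∧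
    (∀ a : A, ‖R.ρ a‖ ≤ ‖R'.ρ a‖) := by
    classical
  -- Part 1 as a key claim
  have key : ∀ v : V, ‖v‖ = 1 → ∀ ε : ℝ, 0 < ε → ∀ F : Finset A, ∃ v' : V', ‖v'‖ = 1 ∧
      ∀ a ∈ F, |‖R.ρ a v‖ - ‖R'.ρ a v'‖| < ε := by
    intro v hv ε hε F
    obtain ⟨v', hv', h⟩ := hwc v hv (ε^2) (by positivity) (F.image fun a => star a * a)
    refine ⟨v', hv', fun a ha => ?_⟩
    have h2 := h (star a * a) (Finset.mem_image_of_mem _ ha)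
    rw [R.coef_sq, R'.coef_sq, norm_coe_sq_sub] at h2
    have h3 := abs_sub_sq_le ‖R.ρ a v‖ ‖R'.ρ a v'‖ (norm_nonneg _) (norm_nonneg _)
    exact lt_of_pow_lt_pow_left₀ 2 hε.le (lt_of_le_of_lt h3 h2)
  refine ⟨key, ?_, ?_⟩
  · -- Part 2
    rintro e he hse v hv ⟨u, hu⟩ ε hε F
    have hev : R.ρ e v = v := by
      rw [← hu, ← ContinuousLinearMap.comp_apply, ← R.mul_apply, he]
    set M : ℝ := ((F.sup fun a => ‖R.ρ a v‖₊ : NNReal) : ℝ) with hMdef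
    have hM0 : 0 ≤ M := NNReal.coe_nonneg _
    have hxM : ∀ a ∈ F, ‖R.ρ a v‖ ≤ M := by
      intro a ha
      have := Finset.le_sup (f := fun a => ‖R.ρ a v‖₊) ha
      exact_mod_cast this
    set δ : ℝ := min (min ((ε/4)^2) (ε/(8*(M+1)))) (1/4) with hδdef
    have hδ0 : 0 < δ := by
      apply lt_min (lt_min (by positivity) (by positivity)) (by norm_num)
    have hδ1 : δ ≤ (ε/4)^2 := le_trans (min_le_left _ _) (min_le_left _ _)
    have hδ2 : δ ≤ ε/(8*(M+1)) := le_trans (min_le_left _ _) (min_le_right _ _)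
    have hδ3 : δ ≤ 1/4 := min_le_right _ _
    have hδ2' : δ * (8*(M+1)) ≤ ε := by
      rw [← le_div_iff₀ (by positivity)]; exact hδ2
    obtain ⟨w, hw, hG⟩ := hwc v hv δ hδ0 (insert e (F.image fun a => star (a*e) * (a*e)))
    set c : ℝ := ‖R'.ρ e w‖ with hcdef
    have hc0 : 0 ≤ c := norm_nonneg _
    -- the coefficient at e
    have hce := hG e (Finset.mem_insert_self _ _)
    have hvv : ⟪v, R.ρ e v⟫ = ((1:ℝ):ℂ)^2 := by
      rw [hev, inner_self_eq_norm_sq_to_K, hv]; norm_cast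
    have hwc2 : ⟪w, R'.ρ e w⟫ = ((c:ℂ))^2 := by
      have := R'.coef_sq e w
      rw [hse, he] at this
      exact this
    rw [hvv, hwc2, norm_coe_sq_sub] at hce
    have hce' : |1 - c^2| < δ := by simpa using hce
    have hchalf : 1/2 < c := by
      rw [abs_lt] at hce'
      nlinarith [hce'.1, hce'.2, sq_nonneg (c - 1/2), sq_nonneg c]
    have hcpos : 0 < c := by linarith
    have hc1 : |1 - c| < δ := by
      have habs : |1 - c^2| = |1 - c| * (1 + c) := by
        rw [← abs_of_nonneg (show (0:ℝ) ≤ 1 + c by linarith), ← abs_mul]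
        ring_nf
      have h1c : 1 ≤ 1 + c := by linarith
      nlinarith [abs_nonneg (1 - c), hce', habs]
    -- the vector v'
    set v' : V' := ((c:ℂ))⁻¹ • R'.ρ e w with hv'def
    have hcne : ((c:ℂ)) ≠ 0 := by exact_mod_cast hcpos.ne'
    have hnv' : ‖v'‖ = 1 := by
      rw [hv'def, norm_smul, norm_inv, Complex.norm_real, Real.norm_eq_abs,
        abs_of_pos hcpos, ← hcdef, inv_mul_cancel₀ hcpos.ne']
    have hev' : R'.ρ e v' = v' := by
      rw [hv'def, map_smul, ← ContinuousLinearMap.comp_apply, ← R'.mul_apply, he]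
    refine ⟨v', hnv', ⟨v', hev'⟩, ?_⟩
    intro a ha
    have h2 := hG (star (a*e) * (a*e))
      (Finset.mem_insert_of_mem (Finset.mem_image_of_mem _ ha))
    rw [R.coef_sq, R'.coef_sq] at h2
    have haev : R.ρ (a*e) v = R.ρ a v := by
      rw [R.mul_apply, ContinuousLinearMap.comp_apply, hev]
    rw [haev, norm_coe_sq_sub] at h2
    set x : ℝ := ‖R.ρ a v‖ with hxdef
    set y : ℝ := ‖R'.ρ (a*e) w‖ with hydef
    have hx0 : 0 ≤ x := norm_nonneg _
    have hy0 : 0 ≤ y := norm_nonneg _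
    have hxy : |x - y| < ε/4 := by
      have h3 := abs_sub_sq_le x y hx0 hy0
      have : |x - y|^2 < (ε/4)^2 := lt_of_le_of_lt h3 (lt_of_lt_of_le h2 hδ1)
      exact lt_of_pow_lt_pow_left₀ 2 (by positivity) this
    have hxMa : x ≤ M := hxM a ha
    -- compute the norm at v'
    have hnav' : ‖R'.ρ a v'‖ = c⁻¹ * y := by
      rw [hv'def, map_smul, norm_smul, norm_inv, Complex.norm_real, Real.norm_eq_abs,
        abs_of_pos hcpos, ← ContinuousLinearMap.comp_apply, ← R'.mul_apply]
    rw [hnav']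
    -- main estimate
    have hc1' : |c - 1| ≤ δ := by rw [abs_sub_comm]; exact hc1.le
    have key2 : |c*x - y| < c*ε := by
      have t3 : |c*x - y| ≤ (|c - 1|) * x + |x - y| := by
        have e1 : c*x - y = (c-1)*x + (x - y) := by ring
        calc |c*x - y| = |(c-1)*x + (x - y)| := by rw [e1]
          _ ≤ |(c-1)*x| + |x - y| := abs_add_le _ _
          _ = (|c - 1|) * x + |x - y| := by rw [abs_mul, abs_of_nonneg hx0]
      have t4 : (|c - 1|) * x ≤ δ*M := mul_le_mul hc1' hxMa hx0 hδ0.le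
      have t5 : (1/2)*ε < c*ε := mul_lt_mul_of_pos_right hchalf hε
      have t6 : δ * (8*(M+1)) = 8*(δ*M) + 8*δ := by ring
      rw [t6] at hδ2'
      linarith [hxy, t3, t4, t5, hδ0, hδ2']
    have heq : x - c⁻¹*y = c⁻¹*(c*x - y) := by field_simp
    rw [heq, abs_mul, abs_inv, abs_of_pos hcpos]
    calc c⁻¹ * |c*x - y| < c⁻¹ * (c*ε) := by
          exact mul_lt_mul_of_pos_left key2 (inv_pos.mpr hcpos)
      _ = ε := by field_simp
  · -- Part 3
    intro a
    refine ContinuousLinearMap.opNorm_le_bound _ (norm_nonneg _) (fun w => ?_)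
    by_cases hw : w = 0
    · simp [hw]
    have hwn : (0:ℝ) < ‖w‖ := norm_pos_iff.mpr hw
    set v : V := ((‖w‖:ℂ))⁻¹ • w with hvdef
    have hv1 : ‖v‖ = 1 := by
      rw [hvdef, norm_smul, norm_inv, Complex.norm_real, Real.norm_eq_abs,
        abs_of_pos hwn, inv_mul_cancel₀ hwn.ne']
    have hbound : ‖R.ρ a v‖ ≤ ‖R'.ρ a‖ := by
      refine le_of_forall_pos_le_add (fun ε hε => ?_)
      obtain ⟨v', hv', h⟩ := key v hv1 ε hε {a}
      have h2 := h a (Finset.mem_singleton_self a)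
      have h3 : ‖R'.ρ a v'‖ ≤ ‖R'.ρ a‖ := by
        calc ‖R'.ρ a v'‖ ≤ ‖R'.ρ a‖ * ‖v'‖ := ContinuousLinearMap.le_opNorm _ _
          _ = ‖R'.ρ a‖ := by rw [hv', mul_one]
      rw [abs_lt] at h2
      linarith [h2.1, h2.2]
    have hav : R.ρ a v = ((‖w‖:ℂ))⁻¹ • R.ρ a w := by rw [hvdef, map_smul]
    have : ‖R.ρ a v‖ = ‖w‖⁻¹ * ‖R.ρ a w‖ := by
      rw [hav, norm_smul, norm_inv, Complex.norm_real, Real.norm_eq_abs, abs_of_pos hwn]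
    rw [this] at hbound
    calc ‖R.ρ a w‖ = ‖w‖ * (‖w‖⁻¹ * ‖R.ρ a w‖) := by field_simp
      _ ≤ ‖w‖ * ‖R'.ρ a‖ := by
          exact mul_le_mul_of_nonneg_left hbound hwn.le
      _ = ‖R'.ρ a‖ * ‖w‖ := mul_comm _ _
end

section
/- Let A be an idempotented *-algebra, let V be an irreducible unitary representation of A and let V' be a unitary representation of A with V ≺ V', and let a₁, …, aₙ ∈ A. Then Spec(a₁|_V, …, aₙ|_V) ⊆ Spec(a₁|_{V'}, …, aₙ|_{V'}). -/
local notation "⟪" x ", " y "⟫" => @inner ℂ _ _ x y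

/-- The common (approximate point) spectrum of a family of operators: the tuples `lam` such
that for every `ε > 0` some unit vector is a simultaneous `ε`-approximate eigenvector. -/
def commonSpec {V : Type*} [NormedAddCommGroup V] [InnerProductSpace ℂ V]
    {n : ℕ} (T : Fin n → V →L[ℂ] V) : Set (Fin n → ℂ) :=
  {lam : Fin n → ℂ | ∀ ε : ℝ, 0 < ε → ∃ v : V, ‖v‖ = 1 ∧ ∀ i, ‖T i v - lam i • v‖ < ε}


lemma URep.normSq_eq {A : Type*} [NonUnitalRing A] [StarRing A] [Module ℂ A]
    {V : Type*} [NormedAddCommGroup V] [InnerProductSpace ℂ V]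
    (R : URep A V) (a : A) (lam : ℂ) (v : V) (hv : ‖v‖ = 1) :
    ((‖R.ρ a v - lam • v‖ ^ 2 : ℝ) : ℂ) =
      ⟪v, R.ρ (star a * a) v⟫ - lam * ⟪v, R.ρ (star a) v⟫
        - (starRingEnd ℂ) lam * ⟪v, R.ρ a v⟫ + (starRingEnd ℂ) lam * lam := by
  have h1 : ⟪R.ρ a v, R.ρ a v⟫ = ⟪v, R.ρ (star a * a) v⟫ := by
    rw [R.star_apply, R.mul_apply]; rfl
  have h2 : ⟪R.ρ a v, v⟫ = ⟪v, R.ρ (star a) v⟫ := R.star_apply a v v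
  have h3 : ⟪v, v⟫ = (1 : ℂ) := by
    rw [inner_self_eq_norm_sq_to_K, hv]; norm_num
  have h4 : ((‖R.ρ a v - lam • v‖ ^ 2 : ℝ) : ℂ) = ⟪R.ρ a v - lam • v, R.ρ a v - lam • v⟫ := by
    rw [inner_self_eq_norm_sq_to_K]; norm_cast
  rw [h4]
  simp only [inner_sub_left, inner_sub_right, inner_smul_left, inner_smul_right, h1, h2, h3]
  ring

/-- If `R ≺ R'` then the common spectrum of `a₁, …, aₙ` on `V` is contained in their common
spectrum on `V'`. -/
theorem commonSpec_subset_of_weaklyContained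
    {A : Type*} [NonUnitalRing A] [StarRing A] [Module ℂ A]
    [IsScalarTower ℂ A A] [SMulCommClass ℂ A A] [StarModule ℂ A]
    (hA : IsIdempotented A)
    {V : Type*} [NormedAddCommGroup V] [InnerProductSpace ℂ V] [CompleteSpace V]
    {V' : Type*} [NormedAddCommGroup V'] [InnerProductSpace ℂ V'] [CompleteSpace V']
    (R : URep A V) (R' : URep A V') (hirr : R.Irreducible)
    (hwc : WeaklyContained R R') {n : ℕ} (a : Fin n → A) :
    commonSpec (fun i => R.ρ (a i)) ⊆ commonSpec (fun i => R'.ρ (a i)) := by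
    classical
  intro lam hlam
  simp only [commonSpec, Set.mem_setOf_eq] at hlam ⊢
  intro ε hε
  set S : ℝ := ∑ i, ‖lam i‖ with hS
  have hS0 : (0:ℝ) ≤ S := Finset.sum_nonneg fun i _ => norm_nonneg _
  have hK : (0:ℝ) < 1 + 2 * S := by linarith
  set ε' : ℝ := ε ^ 2 / (4 * (1 + 2 * S)) with hε'
  have hε'0 : 0 < ε' := by positivity
  obtain ⟨v, hv, hvi⟩ := hlam (ε / 2) (by linarith)
  set F : Finset A := ((Finset.univ.image fun i => star (a i) * a i) ∪
    (Finset.univ.image fun i => star (a i)) ∪ (Finset.univ.image a)) with hF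
  obtain ⟨v', hv', hcoef⟩ := hwc v hv ε' hε'0 F
  refine ⟨v', hv', fun i => ?_⟩
  have d1 := hcoef (star (a i) * a i) (by simp [hF])
  have d2 := hcoef (star (a i)) (by simp [hF])
  have d3 := hcoef (a i) (by simp [hF])
  have e1 := R.normSq_eq (a i) (lam i) v hv
  have e2 := R'.normSq_eq (a i) (lam i) v' hv'
  set c1 : ℂ := ⟪v, R.ρ (star (a i) * a i) v⟫ - ⟪v', R'.ρ (star (a i) * a i) v'⟫ with hc1
  set c2 : ℂ := ⟪v, R.ρ (star (a i)) v⟫ - ⟪v', R'.ρ (star (a i)) v'⟫ with hc2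
  set c3 : ℂ := ⟪v, R.ρ (a i) v⟫ - ⟪v', R'.ρ (a i) v'⟫ with hc3
  set r : ℝ := ‖R.ρ (a i) v - lam i • v‖ with hr
  set r' : ℝ := ‖R'.ρ (a i) v' - lam i • v'‖ with hr'
  have hdiff : ((r' ^ 2 : ℝ) : ℂ) - ((r ^ 2 : ℝ) : ℂ) =
      -c1 + lam i * c2 + (starRingEnd ℂ) (lam i) * c3 := by
    rw [e1, e2, hc1, hc2, hc3]; ring
  have habs : |r' ^ 2 - r ^ 2| ≤ ‖c1‖ + ‖lam i‖ * ‖c2‖ + ‖lam i‖ * ‖c3‖ := by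
    have heq : |r' ^ 2 - r ^ 2| = ‖(((r' ^ 2 - r ^ 2 : ℝ)) : ℂ)‖ := by
      rw [Complex.norm_real]; exact (Real.norm_eq_abs _).symm
    rw [heq, Complex.ofReal_sub, hdiff]
    calc ‖-c1 + lam i * c2 + (starRingEnd ℂ) (lam i) * c3‖
        ≤ ‖-c1 + lam i * c2‖ + ‖(starRingEnd ℂ) (lam i) * c3‖ := norm_add_le _ _
      _ ≤ ‖-c1‖ + ‖lam i * c2‖ + ‖(starRingEnd ℂ) (lam i) * c3‖ := by
          have := norm_add_le (-c1) (lam i * c2); linarith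
      _ = ‖c1‖ + ‖lam i‖ * ‖c2‖ + ‖lam i‖ * ‖c3‖ := by
          rw [norm_neg, norm_mul, norm_mul, RingHomIsometric.norm_map]
  have hlami : ‖lam i‖ ≤ S :=
    Finset.single_le_sum (fun j _ => norm_nonneg (lam j)) (Finset.mem_univ i)
  have hr0 : 0 ≤ r := norm_nonneg _
  have hrlt : r < ε / 2 := hvi i
  have hr2 : r ^ 2 < (ε / 2) ^ 2 := by nlinarith
  have hbnd : ‖c1‖ + ‖lam i‖ * ‖c2‖ + ‖lam i‖ * ‖c3‖ < (1 + 2 * ‖lam i‖) * ε' := by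
    nlinarith [norm_nonneg (lam i), norm_nonneg c2, norm_nonneg c3]
  have hKε : (1 + 2 * ‖lam i‖) * ε' ≤ ε ^ 2 / 4 := by
    have h6 : (1 + 2 * ‖lam i‖) * ε' ≤ (1 + 2 * S) * ε' := by nlinarith
    have h7 : (1 + 2 * S) * ε' = ε ^ 2 / 4 := by
      rw [hε']; field_simp
    linarith
  have hr'2 : r' ^ 2 < ε ^ 2 := by
    have h5 : r' ^ 2 - r ^ 2 ≤ |r' ^ 2 - r ^ 2| := le_abs_self _
    nlinarith
  exact lt_of_pow_lt_pow_left₀ 2 hε.le hr'2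
end

section
/- Let A be an idempotented *-algebra and let a₁, …, aₙ ∈ A be elements that generate A as a ℂ-algebra (as a unital ℂ-algebra if A has a unit). Let V be a one-dimensional unitary representation of A on which each aᵢ acts as multiplication by λᵢ ∈ ℂ, and let V' be a unitary representation of A. Then (λ₁, …, λₙ) ∈ Spec(a₁|_{V'}, …, aₙ|_{V'}) if and only if V ≺ V'. -/
local notation "⟪" x ", " y "⟫" => @inner ℂ _ _ x y

private lemma exists_uniform_eps {α : Type*} (F : Finset α) (Q : α → ℝ → Prop)
    (hmono : ∀ b ε ε', 0 < ε' → ε' ≤ ε → Q b ε → Q b ε')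
    (h : ∀ b ∈ F, ∃ ε, 0 < ε ∧ Q b ε) : ∃ ε, 0 < ε ∧ ∀ b ∈ F, Q b ε := by
  classical
  induction F using Finset.induction_on with
  | empty => exact ⟨1, one_pos, by simp⟩
  | @insert x s hx ih =>
    obtain ⟨ε₁, hε₁, hQ₁⟩ := h x (Finset.mem_insert_self _ _)
    obtain ⟨ε₂, hε₂, hQ₂⟩ := ih (fun b hb => h b (Finset.mem_insert_of_mem hb))
    refine ⟨min ε₁ ε₂, lt_min hε₁ hε₂, fun b hb => ?_⟩
    rcases Finset.mem_insert.mp hb with rfl | hb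
    · exact hmono b ε₁ _ (lt_min hε₁ hε₂) (min_le_left _ _) hQ₁
    · exact hmono b ε₂ _ (lt_min hε₁ hε₂) (min_le_right _ _) (hQ₂ b hb)

set_option maxHeartbeats 1000000 in
/-- Suppose `a₁, …, aₙ` generate `A` as a `ℂ`-algebra (as a unital algebra if `A` has a
unit), and let `V` be a one-dimensional unitary representation on which `aᵢ` acts as the
scalar `lam i`. Then `lam` lies in the common spectrum of the `aᵢ` on a unitary
representation `V'` if and only if `V` is weakly contained in `V'`. -/
theorem one_dim_commonSpec_iff_weaklyContained
    {A : Type*} [NonUnitalRing A] [StarRing A] [Module ℂ A]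
    [IsScalarTower ℂ A A] [SMulCommClass ℂ A A] [StarModule ℂ A]
    (hA : IsIdempotented A) {n : ℕ} (a : Fin n → A)
    (hgen : NonUnitalAlgebra.adjoin ℂ (Set.range a) = ⊤ ∨
      ∃ e : A, (∀ x : A, e * x = x ∧ x * e = x) ∧
        NonUnitalAlgebra.adjoin ℂ (insert e (Set.range a)) = ⊤)
    {V : Type*} [NormedAddCommGroup V] [InnerProductSpace ℂ V] [CompleteSpace V]
    {V' : Type*} [NormedAddCommGroup V'] [InnerProductSpace ℂ V'] [CompleteSpace V']
    (R : URep A V) (hdim : Module.finrank ℂ V = 1)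
    (lam : Fin n → ℂ) (hlam : ∀ (i : Fin n) (w : V), R.ρ (a i) w = lam i • w)
    (R' : URep A V') :
    lam ∈ commonSpec (fun i => R'.ρ (a i)) ↔ WeaklyContained R R' := by
  classical
  -- a unit vector in V
  have hnt : Nontrivial V := by
    have h0 : 0 < Module.finrank ℂ V := by omega
    exact Module.nontrivial_of_finrank_pos h0
  obtain ⟨w₀, hw₀⟩ := exists_ne (0 : V)
  set v₀ : V := ‖w₀‖⁻¹ • w₀ with hv₀def
  have hv₀ : ‖v₀‖ = 1 := by
    rw [hv₀def, norm_smul, norm_inv, norm_norm,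
      inv_mul_cancel₀ (norm_ne_zero_iff.mpr hw₀)]
  have hv₀ne : v₀ ≠ 0 := by
    intro h; rw [h, norm_zero] at hv₀; norm_num at hv₀
  have hspan : Submodule.span ℂ ({v₀} : Set V) = ⊤ :=
    (finrank_eq_one_iff_of_nonzero v₀ hv₀ne).mp hdim
  have hinner_self : ⟪v₀, v₀⟫ = 1 := by
    rw [inner_self_eq_norm_sq_to_K, hv₀]; norm_num
  set χ : A → ℂ := fun b => ⟪v₀, R.ρ b v₀⟫ with hχdef
  have hscal₀ : ∀ b : A, R.ρ b v₀ = χ b • v₀ := by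
    intro b
    have hmem : R.ρ b v₀ ∈ Submodule.span ℂ ({v₀} : Set V) := by
      rw [hspan]; exact Submodule.mem_top
    obtain ⟨d, hd⟩ := Submodule.mem_span_singleton.mp hmem
    have hχb : χ b = d := by
      rw [hχdef]; simp only
      rw [← hd, inner_smul_right, hinner_self, mul_one]
    rw [hχb, hd]
  have hscal : ∀ (b : A) (w : V), R.ρ b w = χ b • w := by
    intro b w
    have hmem : w ∈ Submodule.span ℂ ({v₀} : Set V) := by
      rw [hspan]; exact Submodule.mem_top
    obtain ⟨c, hc⟩ := Submodule.mem_span_singleton.mp hmem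
    rw [← hc, map_smul, hscal₀, smul_comm]
  have hχa : ∀ i, χ (a i) = lam i := by
    intro i
    rw [hχdef]; simp only
    rw [hlam i v₀, inner_smul_right, hinner_self, mul_one]
  have hχmul : ∀ b c : A, χ (b * c) = χ b * χ c := by
    intro b c
    have h1 : R.ρ (b * c) v₀ = (χ b * χ c) • v₀ := by
      rw [R.mul_apply, ContinuousLinearMap.comp_apply, hscal₀ c, map_smul,
        hscal₀ b, smul_smul, mul_comm]
    rw [hχdef]; simp only
    rw [h1, inner_smul_right, hinner_self, mul_one]
  have hχzero : χ 0 = 0 := by rw [hχdef]; simp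
  have hχadd : ∀ b c : A, χ (b + c) = χ b + χ c := by
    intro b c
    rw [hχdef]; simp only
    rw [map_add, ContinuousLinearMap.add_apply, inner_add_right]
  have hχsmul : ∀ (r : ℂ) (b : A), χ (r • b) = r * χ b := by
    intro r b
    rw [hχdef]; simp only
    rw [show R.ρ (r • b) = r • R.ρ b from map_smul R.ρ r b,
      ContinuousLinearMap.smul_apply, inner_smul_right]
  have hcoef : ∀ v : V, ‖v‖ = 1 → ∀ b : A, ⟪v, R.ρ b v⟫ = χ b := by
    intro v hv b
    rw [hscal b v, inner_smul_right, inner_self_eq_norm_sq_to_K, hv]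
    norm_num
  constructor
  · -- common spectrum → weak containment
    intro hspec
    set P : A → Prop := fun b => ∀ δ : ℝ, 0 < δ → ∃ ε, 0 < ε ∧ ∀ v' : V', ‖v'‖ = 1 →
      (∀ i, ‖R'.ρ (a i) v' - lam i • v'‖ < ε) → ‖R'.ρ b v' - χ b • v'‖ < δ with hPdef
    have hPa : ∀ i, P (a i) := by
      intro i δ hδ
      exact ⟨δ, hδ, fun v' _ h => by rw [hχa i]; exact h i⟩
    have hPzero : P 0 := by
      intro δ hδ
      refine ⟨1, one_pos, fun v' hv' _ => ?_⟩
      rw [hχzero, map_zero]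
      simpa using hδ
    have hPadd : ∀ b c : A, P b → P c → P (b + c) := by
      intro b c hb hc δ hδ
      obtain ⟨ε₁, hε₁, h₁⟩ := hb (δ/2) (by positivity)
      obtain ⟨ε₂, hε₂, h₂⟩ := hc (δ/2) (by positivity)
      refine ⟨min ε₁ ε₂, lt_min hε₁ hε₂, fun v' hv' happ => ?_⟩
      have e₁ := h₁ v' hv' (fun i => lt_of_lt_of_le (happ i) (min_le_left _ _))
      have e₂ := h₂ v' hv' (fun i => lt_of_lt_of_le (happ i) (min_le_right _ _))
      have key : R'.ρ (b + c) v' - χ (b + c) • v'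
          = (R'.ρ b v' - χ b • v') + (R'.ρ c v' - χ c • v') := by
        rw [map_add, ContinuousLinearMap.add_apply, hχadd, add_smul]
        abel
      rw [key]
      calc ‖(R'.ρ b v' - χ b • v') + (R'.ρ c v' - χ c • v')‖
          ≤ ‖R'.ρ b v' - χ b • v'‖ + ‖R'.ρ c v' - χ c • v'‖ := norm_add_le _ _
        _ < δ/2 + δ/2 := add_lt_add e₁ e₂
        _ = δ := by ring
    have hPsmul : ∀ (r : ℂ) (b : A), P b → P (r • b) := by
      intro r b hb δ hδ
      obtain ⟨ε₁, hε₁, h₁⟩ := hb (δ / (‖r‖ + 1)) (by positivity)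
      refine ⟨ε₁, hε₁, fun v' hv' happ => ?_⟩
      have e₁ := h₁ v' hv' happ
      have key : R'.ρ (r • b) v' - χ (r • b) • v' = r • (R'.ρ b v' - χ b • v') := by
        rw [map_smul, ContinuousLinearMap.smul_apply, hχsmul, smul_sub, smul_smul]
      rw [key, norm_smul]
      have hr1 : (0:ℝ) < ‖r‖ + 1 := by positivity
      calc ‖r‖ * ‖R'.ρ b v' - χ b • v'‖
          ≤ (‖r‖ + 1) * ‖R'.ρ b v' - χ b • v'‖ := by
            apply mul_le_mul_of_nonneg_right (by linarith) (norm_nonneg _)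
        _ < (‖r‖ + 1) * (δ / (‖r‖ + 1)) := by
            exact mul_lt_mul_of_pos_left e₁ hr1
        _ = δ := by field_simp
    have hPmul : ∀ b c : A, P b → P c → P (b * c) := by
      intro b c hb hc δ hδ
      have pb : (0:ℝ) < ‖R'.ρ b‖ + 1 := by positivity
      have pc : (0:ℝ) < ‖χ c‖ + 1 := by positivity
      obtain ⟨ε₁, hε₁, h₁⟩ := hc (δ / (2 * (‖R'.ρ b‖ + 1))) (by positivity)
      obtain ⟨ε₂, hε₂, h₂⟩ := hb (δ / (2 * (‖χ c‖ + 1))) (by positivity)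
      refine ⟨min ε₁ ε₂, lt_min hε₁ hε₂, fun v' hv' happ => ?_⟩
      have e₁ := h₁ v' hv' (fun i => lt_of_lt_of_le (happ i) (min_le_left _ _))
      have e₂ := h₂ v' hv' (fun i => lt_of_lt_of_le (happ i) (min_le_right _ _))
      have key : R'.ρ (b * c) v' - χ (b * c) • v'
          = R'.ρ b (R'.ρ c v' - χ c • v') + χ c • (R'.ρ b v' - χ b • v') := by
        have hsw : (χ b * χ c) • v' = χ c • (χ b • v') := by
          rw [smul_smul, mul_comm]
        rw [R'.mul_apply, ContinuousLinearMap.comp_apply, hχmul, hsw, map_sub,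
          map_smul, smul_sub]
        abel
      rw [key]
      have hb1 : ‖R'.ρ b (R'.ρ c v' - χ c • v')‖
          ≤ (‖R'.ρ b‖ + 1) * ‖R'.ρ c v' - χ c • v'‖ := by
        calc ‖R'.ρ b (R'.ρ c v' - χ c • v')‖
            ≤ ‖R'.ρ b‖ * ‖R'.ρ c v' - χ c • v'‖ := (R'.ρ b).le_opNorm _
          _ ≤ (‖R'.ρ b‖ + 1) * ‖R'.ρ c v' - χ c • v'‖ := by
              apply mul_le_mul_of_nonneg_right (by linarith) (norm_nonneg _)
      have hb2 : ‖χ c • (R'.ρ b v' - χ b • v')‖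
          ≤ (‖χ c‖ + 1) * ‖R'.ρ b v' - χ b • v'‖ := by
        rw [norm_smul]
        apply mul_le_mul_of_nonneg_right (by linarith) (norm_nonneg _)
      have n1 : (‖R'.ρ b‖ + 1) * ‖R'.ρ c v' - χ c • v'‖ < δ / 2 := by
        calc (‖R'.ρ b‖ + 1) * ‖R'.ρ c v' - χ c • v'‖
            < (‖R'.ρ b‖ + 1) * (δ / (2 * (‖R'.ρ b‖ + 1))) := mul_lt_mul_of_pos_left e₁ pb
          _ = δ / 2 := by field_simp
      have n2 : (‖χ c‖ + 1) * ‖R'.ρ b v' - χ b • v'‖ < δ / 2 := by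
        calc (‖χ c‖ + 1) * ‖R'.ρ b v' - χ b • v'‖
            < (‖χ c‖ + 1) * (δ / (2 * (‖χ c‖ + 1))) := mul_lt_mul_of_pos_left e₂ pc
          _ = δ / 2 := by field_simp
      calc ‖R'.ρ b (R'.ρ c v' - χ c • v') + χ c • (R'.ρ b v' - χ b • v')‖
          ≤ ‖R'.ρ b (R'.ρ c v' - χ c • v')‖ + ‖χ c • (R'.ρ b v' - χ b • v')‖ :=
            norm_add_le _ _
        _ < δ := by linarith
    have hP : ∀ b : A, P b := by
      rcases hgen with hgen | ⟨e, he, hgen⟩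
      · intro b
        have hb : b ∈ NonUnitalAlgebra.adjoin ℂ (Set.range a) := by
          rw [hgen]; trivial
        refine NonUnitalAlgebra.adjoin_induction (p := fun x _ => P x) ?_ ?_ ?_ ?_ ?_ hb
        · rintro x ⟨i, rfl⟩; exact hPa i
        · intro x y _ _ hx hy; exact hPadd x y hx hy
        · exact hPzero
        · intro x y _ _ hx hy; exact hPmul x y hx hy
        · intro r x _ hx; exact hPsmul r x hx
      · -- unital case
        have hex : ∃ b : A, χ b ≠ 0 := by
          by_contra h
          push_neg at h
          have hsp : Submodule.span ℂ {w : V | ∃ (b : A) (u : V), R.ρ b u = w} = ⊥ := by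
            apply le_bot_iff.mp
            apply Submodule.span_le.mpr
            rintro w ⟨b, u, rfl⟩
            simp [hscal b u, h b]
          have hd := R.denseSmooth
          rw [hsp] at hd
          have hv := hd v₀
          rw [Submodule.bot_coe, IsClosed.closure_eq isClosed_singleton] at hv
          exact hv₀ne hv
        obtain ⟨b₀, hb₀⟩ := hex
        have hχe : χ e = 1 := by
          have h1 : χ b₀ = χ e * χ b₀ := by rw [← hχmul, (he b₀).1]
          exact mul_right_cancel₀ hb₀ (by rw [one_mul, ← h1])
        have hid : ∀ w : V', R'.ρ e w = w := by
          have heq : (R'.ρ e : V' → V') = id := by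
            apply Continuous.ext_on R'.denseSmooth (R'.ρ e).continuous continuous_id
            intro w hw
            induction hw using Submodule.span_induction with
            | mem x hx =>
              obtain ⟨b, u, rfl⟩ := hx
              show R'.ρ e (R'.ρ b u) = id (R'.ρ b u)
              rw [← ContinuousLinearMap.comp_apply, ← R'.mul_apply, (he b).1, id_eq]
            | zero => simp
            | add x y _ _ hx hy =>
              simp only [id_eq] at hx hy ⊢
              rw [map_add, hx, hy]
            | smul r x _ hx =>
              simp only [id_eq] at hx ⊢
              rw [map_smul, hx]
          intro w
          exact congrFun heq w
        have hPe : P e := by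
          intro δ hδ
          refine ⟨1, one_pos, fun v' hv' _ => ?_⟩
          rw [hid v', hχe, one_smul]
          simpa using hδ
        intro b
        have hb : b ∈ NonUnitalAlgebra.adjoin ℂ (insert e (Set.range a)) := by
          rw [hgen]; trivial
        refine NonUnitalAlgebra.adjoin_induction (p := fun x _ => P x) ?_ ?_ ?_ ?_ ?_ hb
        · rintro x hx
          rcases hx with rfl | ⟨i, rfl⟩
          · exact hPe
          · exact hPa i
        · intro x y _ _ hx hy; exact hPadd x y hx hy
        · exact hPzero
        · intro x y _ _ hx hy; exact hPmul x y hx hy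
        · intro r x _ hx; exact hPsmul r x hx
    intro v hv ε hε F
    have hQ : ∀ b ∈ F, ∃ ε', 0 < ε' ∧ ∀ v' : V', ‖v'‖ = 1 →
        (∀ i, ‖R'.ρ (a i) v' - lam i • v'‖ < ε') → ‖R'.ρ b v' - χ b • v'‖ < ε :=
      fun b _ => hP b ε hε
    obtain ⟨ε', hε', hQ'⟩ := exists_uniform_eps F _
      (fun b εa εb hεb hle hεa v' hv' happ =>
        hεa v' hv' (fun i => lt_of_lt_of_le (happ i) hle)) hQ
    obtain ⟨v', hv'norm, hv'⟩ := hspec ε' hε'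
    refine ⟨v', hv'norm, fun b hb => ?_⟩
    rw [hcoef v hv b]
    have hball := hQ' b hb v' hv'norm (fun i => hv' i)
    have hsub : ⟪v', R'.ρ b v'⟫ - χ b = ⟪v', R'.ρ b v' - χ b • v'⟫ := by
      rw [inner_sub_right, inner_smul_right, inner_self_eq_norm_sq_to_K, hv'norm]
      norm_num
    calc ‖χ b - ⟪v', R'.ρ b v'⟫‖ = ‖⟪v', R'.ρ b v' - χ b • v'⟫‖ := by
          rw [← hsub, norm_sub_rev]
      _ ≤ ‖v'‖ * ‖R'.ρ b v' - χ b • v'‖ := norm_inner_le_norm _ _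
      _ = ‖R'.ρ b v' - χ b • v'‖ := by rw [hv'norm, one_mul]
      _ < ε := hball
  · -- weak containment → common spectrum
    intro hwc ε hε
    set M : ℝ := ∑ i, ‖lam i‖ with hM
    have hMnn : 0 ≤ M := Finset.sum_nonneg (fun i _ => norm_nonneg _)
    have hMi : ∀ i, ‖lam i‖ ≤ M :=
      fun i => Finset.single_le_sum (fun j _ => norm_nonneg _) (Finset.mem_univ i)
    set ε' : ℝ := ε^2 / (1 + 2*M) with hε'def
    have hε'pos : 0 < ε' := by positivity
    have hε'eq : ε' * (1 + 2*M) = ε^2 := by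
      rw [hε'def]; field_simp
    set F : Finset A := Finset.image a Finset.univ ∪
      Finset.image (fun i => star (a i) * a i) Finset.univ with hF
    obtain ⟨v', hv'norm, hv'⟩ := hwc v₀ hv₀ ε' hε'pos F
    refine ⟨v', hv'norm, fun i => ?_⟩
    have h1 := hv' (a i) (by
      rw [hF]
      exact Finset.mem_union_left _ (Finset.mem_image_of_mem a (Finset.mem_univ i)))
    have h2 := hv' (star (a i) * a i) (by
      rw [hF]
      exact Finset.mem_union_right _ (Finset.mem_image_of_mem _ (Finset.mem_univ i)))
    rw [hcoef v₀ hv₀] at h1 h2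
    rw [hχa i] at h1
    have hχstar : χ (star (a i)) = starRingEnd ℂ (lam i) := by
      rw [hχdef]; simp only
      rw [← R.star_apply (a i) v₀ v₀, hlam, inner_smul_left, hinner_self, mul_one]
    have hχsa : χ (star (a i) * a i) = ((‖lam i‖^2 : ℝ) : ℂ) := by
      rw [hχmul, hχstar, hχa, mul_comm, Complex.mul_conj]
      rw [Complex.normSq_eq_norm_sq]
    have hNv : ⟪v', R'.ρ (star (a i) * a i) v'⟫ = ((‖R'.ρ (a i) v'‖^2 : ℝ) : ℂ) := by
      rw [R'.mul_apply, ContinuousLinearMap.comp_apply, ← R'.star_apply,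
        inner_self_eq_norm_sq_to_K]
      norm_cast
    rw [hχsa, hNv] at h2
    set T : V' →L[ℂ] V' := R'.ρ (a i) with hT
    set c : ℂ := ⟪v', T v'⟫ with hc
    have h2' : |‖lam i‖^2 - ‖T v'‖^2| < ε' := by
      have : ((‖lam i‖^2 : ℝ) : ℂ) - ((‖T v'‖^2 : ℝ) : ℂ)
          = (((‖lam i‖^2 - ‖T v'‖^2 : ℝ)) : ℂ) := by push_cast; ring
      rw [this, Complex.norm_real, Real.norm_eq_abs] at h2
      exact h2
    have h1' : ‖c - lam i‖ < ε' := by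
      rw [norm_sub_rev]; exact h1
    have hsq : ‖T v' - lam i • v'‖^2
        = ‖T v'‖^2 - 2 * Complex.re (lam i * starRingEnd ℂ c) + ‖lam i‖^2 := by
      rw [@norm_sub_sq ℂ]
      have hip : ⟪T v', lam i • v'⟫ = lam i * starRingEnd ℂ c := by
        rw [inner_smul_right, ← inner_conj_symm, ← hc]
      rw [hip, norm_smul, hv'norm, mul_one]
      norm_num
    have hre : Complex.re (lam i * starRingEnd ℂ c)
        = ‖lam i‖^2 + Complex.re (lam i * starRingEnd ℂ (c - lam i)) := by
      have hsplit : lam i * starRingEnd ℂ c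
          = lam i * starRingEnd ℂ (lam i) + lam i * starRingEnd ℂ (c - lam i) := by
        rw [map_sub]; ring
      rw [hsplit, Complex.add_re, Complex.mul_conj, Complex.normSq_eq_norm_sq,
        Complex.ofReal_re]
    have habs : |Complex.re (lam i * starRingEnd ℂ (c - lam i))|
        ≤ ‖lam i‖ * ‖c - lam i‖ := by
      calc |Complex.re (lam i * starRingEnd ℂ (c - lam i))|
          ≤ ‖lam i * starRingEnd ℂ (c - lam i)‖ := Complex.abs_re_le_norm _
        _ = ‖lam i‖ * ‖c - lam i‖ := by
            rw [norm_mul, RCLike.norm_conj]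
    have hprod : ‖lam i‖ * ‖c - lam i‖ ≤ M * ε' :=
      mul_le_mul (hMi i) h1'.le (norm_nonneg _) hMnn
    have hx2 : ‖T v' - lam i • v'‖^2 < ε^2 := by
      have habs' := abs_le.mp habs
      have h2'' := abs_lt.mp h2'
      rw [hsq, hre]
      linarith [habs'.1, habs'.2, h2''.1, h2''.2, hprod, hε'eq]
    show ‖T v' - lam i • v'‖ < ε
    exact lt_of_pow_lt_pow_left₀ 2 hε.le hx2
end

section
/- Let A be an idempotented *-algebra. (1) If V is an admissible pre-unitary representation of A and V̄ is its Hilbert-space completion (a unitary representation of A), then A·V̄ = V inside V̄; consequently the assignments U ↦ A·U (smooth part) and V ↦ V̄ (completion) are mutually inverse between admissible unitary representations and admissible pre-unitary representations of A. (2) An admissible unitary representation U of A is irreducible (no closed A-submodules other than 0 and U, and U ≠ 0) if and only if its smooth part A·U is an irreducible A-module (nonzero, with no A-submodules other than 0 and A·U). -/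
local notation "⟪" x ", " y "⟫" => @inner ℂ _ _ x y

/-- A pre-unitary representation of `A` on a complex inner product space `V` (not assumed
complete): conditions (U1), (U3), and smoothness `A·V = V`. -/
structure PURep (A : Type*) [NonUnitalRing A] [StarRing A] [Module ℂ A]
    (V : Type*) [NormedAddCommGroup V] [InnerProductSpace ℂ V] where
  ρ : A →ₗ[ℂ] V →L[ℂ] V
  mul_apply : ∀ a b : A, ρ (a * b) = (ρ a).comp (ρ b)
  star_apply : ∀ (a : A) (u v : V), ⟪ρ a u, v⟫ = ⟪u, ρ (star a) v⟫
  smooth : Submodule.span ℂ {w : V | ∃ (a : A) (u : V), ρ a u = w} = ⊤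

universe u v w

section Helpers

variable {A : Type*} [NonUnitalRing A] [StarRing A] [Module ℂ A]
variable {V : Type*} [NormedAddCommGroup V] [InnerProductSpace ℂ V]

/-- If `g` dominates `e` and `ρ e x = x` then `ρ g x = x`. -/
lemma fix_transfer (ρ : A →ₗ[ℂ] V →L[ℂ] V)
    (hmul : ∀ a b : A, ρ (a * b) = (ρ a).comp (ρ b))
    {e g : A} (hgg : g * g = g) (hge : g * e * g = e) {x : V} (hex : ρ e x = x) :
    ρ g x = x := by
  have hge' : g * e = e := by
    conv_lhs => rw [← hge]
    rw [← mul_assoc, ← mul_assoc, hgg]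
    exact hge
  calc ρ g x = ρ g (ρ e x) := by rw [hex]
    _ = ρ (g * e) x := by rw [hmul]; rfl
    _ = x := by rw [hge', hex]

/-- Membership in the smooth part is equivalent to being fixed by some self-adjoint
idempotent. -/
lemma mem_smooth_iff (hA : IsIdempotented A) (ρ : A →ₗ[ℂ] V →L[ℂ] V)
    (hmul : ∀ a b : A, ρ (a * b) = (ρ a).comp (ρ b)) (x : V) :
    x ∈ Submodule.span ℂ {w : V | ∃ (a : A) (u : V), ρ a u = w} ↔
      ∃ e : A, e * e = e ∧ star e = e ∧ ρ e x = x := by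
  constructor
  · intro hx
    induction hx using Submodule.span_induction with
    | mem w hw =>
      obtain ⟨a, u, rfl⟩ := hw
      obtain ⟨e, hee, hse, hF⟩ := hA {a}
      have ha : e * a * e = a := hF a (Finset.mem_singleton_self a)
      have hea : e * a = a := by
        conv_lhs => rw [← ha]
        rw [← mul_assoc, ← mul_assoc, hee, ha]
      exact ⟨e, hee, hse, by
        calc ρ e (ρ a u) = ρ (e * a) u := by rw [hmul]; rfl
          _ = ρ a u := by rw [hea]⟩
    | zero =>
      obtain ⟨e, hee, hse, -⟩ := hA ∅
      exact ⟨e, hee, hse, map_zero _⟩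
    | add y z hy hz ihy ihz =>
      classical
      obtain ⟨e, hee, hse, hey⟩ := ihy
      obtain ⟨f, hff, hsf, hfz⟩ := ihz
      obtain ⟨g, hgg, hsg, hF⟩ := hA {e, f}
      have h1 : ρ g y = y := fix_transfer ρ hmul hgg (hF e (by simp)) hey
      have h2 : ρ g z = z := fix_transfer ρ hmul hgg (hF f (by simp)) hfz
      exact ⟨g, hgg, hsg, by rw [map_add, h1, h2]⟩
    | smul c y hy ihy =>
      obtain ⟨e, hee, hse, hey⟩ := ihy
      exact ⟨e, hee, hse, by rw [map_smul, hey]⟩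
  · rintro ⟨e, _, _, hex⟩
    exact hex ▸ Submodule.subset_span ⟨e, x, rfl⟩

/-- If `T` maps a dense set into a finite-dimensional subspace, then its whole range lies
in that subspace. -/
lemma apply_mem_of_dense [CompleteSpace V] (T : V →L[ℂ] V) {D : Set V} (hD : Dense D)
    (K : Submodule ℂ V) [FiniteDimensional ℂ K] (hTD : T '' D ⊆ ↑K) (x : V) : T x ∈ K := by
  have hx : T x ∈ T '' closure D := ⟨x, by rw [hD.closure_eq]; trivial, rfl⟩
  have h1 : T '' closure D ⊆ closure (T '' D) := image_closure_subset_closure_image T.continuous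
  have h2 : closure (T '' D) ⊆ closure (K : Set V) := closure_mono hTD
  rw [K.closed_of_finiteDimensional.closure_eq] at h2
  exact h2 (h1 hx)

/-- Invariance of a span under the action. -/
lemma span_invariant (ρ : A →ₗ[ℂ] V →L[ℂ] V) {S : Set V}
    (h : ∀ b : A, ∀ x ∈ S, ρ b x ∈ Submodule.span ℂ S) (b : A) {x : V}
    (hx : x ∈ Submodule.span ℂ S) : ρ b x ∈ Submodule.span ℂ S := by
  induction hx using Submodule.span_induction with
  | mem w hw => exact h b w hw
  | zero => rw [map_zero]; exact zero_mem _
  | add y z _ _ ihy ihz => rw [map_add]; exact add_mem ihy ihz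
  | smul c y _ ihy => rw [map_smul]; exact Submodule.smul_mem _ _ ihy

end Helpers

/-- (1) If `V` is an admissible pre-unitary representation of `A` and `W` its Hilbert-space
completion (a unitary representation via the dense isometric equivariant embedding `j`),
then the smooth part `A·W` of `W` equals `j(V)`; consequently completion and smooth part
are mutually inverse on admissible representations. (2) An admissible unitary
representation `U` is irreducible iff its smooth part `A·U` is an irreducible `A`-module. -/
theorem admissible_completion_and_smooth_part
    {A : Type u} [NonUnitalRing A] [StarRing A] [Module ℂ A]
    [IsScalarTower ℂ A A] [SMulCommClass ℂ A A] [StarModule ℂ A]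
    (hA : IsIdempotented A) :
    (∀ (V : Type v) (_ : NormedAddCommGroup V) (_ : InnerProductSpace ℂ V)
      (W : Type w) (_ : NormedAddCommGroup W) (_ : InnerProductSpace ℂ W)
      (_ : CompleteSpace W)
      (P : PURep A V) (R : URep A W) (j : V →ₗᵢ[ℂ] W),
      (∀ e : A, e * e = e → star e = e →
        FiniteDimensional ℂ (LinearMap.range ((P.ρ e : V →ₗ[ℂ] V)))) →
      Dense (Set.range fun x : V => j x) →
      (∀ (a : A) (x : V), R.ρ a (j x) = j (P.ρ a x)) →
      Submodule.span ℂ {y : W | ∃ (a : A) (x : W), R.ρ a x = y} =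
        LinearMap.range j.toLinearMap) ∧
    (∀ (U : Type w) (_ : NormedAddCommGroup U) (_ : InnerProductSpace ℂ U)
      (_ : CompleteSpace U) (R : URep A U),
      (∀ e : A, e * e = e → star e = e →
        FiniteDimensional ℂ (LinearMap.range ((R.ρ e : U →ₗ[ℂ] U)))) →
      (R.Irreducible ↔
        (Submodule.span ℂ {x : U | ∃ (a : A) (u : U), R.ρ a u = x} ≠ ⊥ ∧
         ∀ N : Submodule ℂ U,
           N ≤ Submodule.span ℂ {x : U | ∃ (a : A) (u : U), R.ρ a u = x} →
           (∀ a : A, ∀ x ∈ N, R.ρ a x ∈ N) →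
           N = ⊥ ∨ N = Submodule.span ℂ {x : U | ∃ (a : A) (u : U), R.ρ a u = x}))) := by
  constructor
  · -- Part (1)
    intro V _ _ W _ _ _ P R j hadm hdense hj
    apply le_antisymm
    · -- smooth part of W ≤ range j
      rw [Submodule.span_le]
      rintro y ⟨a, x, rfl⟩
      obtain ⟨e, hee, hse, hF⟩ := hA {a}
      have ha : e * a * e = a := hF a (Finset.mem_singleton_self a)
      have hy : ∃ z, R.ρ e z = R.ρ a x := by
        refine ⟨R.ρ (a * e) x, ?_⟩
        rw [← ContinuousLinearMap.comp_apply, ← R.mul_apply, ← mul_assoc, ha]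
      obtain ⟨z, hz⟩ := hy
      haveI : FiniteDimensional ℂ (LinearMap.range ((P.ρ e : V →ₗ[ℂ] V))) := hadm e hee hse
      haveI : FiniteDimensional ℂ
          ((LinearMap.range ((P.ρ e : V →ₗ[ℂ] V))).map j.toLinearMap) :=
        Module.Finite.map _ _
      have hmem : R.ρ e z ∈ (LinearMap.range ((P.ρ e : V →ₗ[ℂ] V))).map j.toLinearMap := by
        refine apply_mem_of_dense (R.ρ e) hdense _ ?_ z
        rintro _ ⟨_, ⟨v, rfl⟩, rfl⟩
        exact ⟨P.ρ e v, ⟨v, rfl⟩, (hj e v).symm⟩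
      rw [hz] at hmem
      obtain ⟨u, -, hu⟩ := hmem
      exact ⟨u, hu⟩
    · -- range j ≤ smooth part of W
      rintro y ⟨x, rfl⟩
      have hx : x ∈ Submodule.span ℂ {w : V | ∃ (a : A) (u : V), P.ρ a u = w} := by
        rw [P.smooth]; trivial
      obtain ⟨e, hee, hse, hex⟩ := (mem_smooth_iff hA P.ρ P.mul_apply x).mp hx
      exact Submodule.subset_span ⟨e, j x, by rw [hj, hex]; rfl⟩
  · -- Part (2)
    intro U _ _ _ R hadm
    constructor
    · rintro ⟨⟨v₀, hv₀⟩, hirr⟩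
      constructor
      · -- smooth part is nonzero
        intro hbot
        have hd := R.denseSmooth
        rw [hbot] at hd
        have hv : v₀ ∈ closure (((⊥ : Submodule ℂ U) : Set U)) := by
          rw [hd.closure_eq]; trivial
        rw [Submodule.bot_coe, isClosed_singleton.closure_eq] at hv
        exact hv₀ hv
      · intro N hNM hNinv
        by_cases hN : N = ⊥
        · exact Or.inl hN
        right
        -- the closure of N is a nonzero closed invariant subspace, hence ⊤
        have hinv : ∀ a : A, ∀ v ∈ N.topologicalClosure, R.ρ a v ∈ N.topologicalClosure := by
          intro a v hv
          have hv' : v ∈ closure (N : Set U) := by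
            rw [← Submodule.topologicalClosure_coe]; exact hv
          have h1 : R.ρ a v ∈ (R.ρ a) '' closure (N : Set U) := ⟨v, hv', rfl⟩
          have h2 : (R.ρ a) '' closure (N : Set U) ⊆ closure ((R.ρ a) '' (N : Set U)) :=
            image_closure_subset_closure_image (R.ρ a).continuous
          have h3 : closure ((R.ρ a) '' (N : Set U)) ⊆ closure (N : Set U) := by
            apply closure_mono
            rintro _ ⟨y, hy, rfl⟩
            exact hNinv a y hy
          have : R.ρ a v ∈ closure (N : Set U) := h3 (h2 h1)
          rw [← Submodule.topologicalClosure_coe] at this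
          exact this
        rcases hirr N.topologicalClosure N.isClosed_topologicalClosure hinv with h | h
        · exact absurd (le_bot_iff.mp (h ▸ N.le_topologicalClosure)) hN
        · -- N is dense; by admissibility N contains the whole smooth part
          have hdense : Dense (N : Set U) := by
            rw [dense_iff_closure_eq, ← Submodule.topologicalClosure_coe, h]
            rfl
          apply le_antisymm hNM
          intro x hx
          obtain ⟨e, hee, hse, hex⟩ := (mem_smooth_iff hA R.ρ R.mul_apply x).mp hx
          haveI : FiniteDimensional ℂ (LinearMap.range ((R.ρ e : U →ₗ[ℂ] U))) :=
            hadm e hee hse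
          set K : Submodule ℂ U := LinearMap.range ((R.ρ e : U →ₗ[ℂ] U)) ⊓ N with hKdef
          haveI : FiniteDimensional ℂ K :=
            Submodule.finiteDimensional_of_le inf_le_left
          have hmem : R.ρ e x ∈ K := by
            refine apply_mem_of_dense (R.ρ e) hdense _ ?_ x
            rintro _ ⟨y, hy, rfl⟩
            exact Submodule.mem_inf.mpr ⟨⟨y, rfl⟩, hNinv e y hy⟩
          rw [hex] at hmem
          exact (Submodule.mem_inf.mp hmem).2
    · rintro ⟨hMne, hMirr⟩
      constructor
      · obtain ⟨x, -, hx0⟩ := (Submodule.ne_bot_iff _).mp hMne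
        exact ⟨x, hx0⟩
      · intro Wsub hWclosed hWinv
        by_cases hW : Wsub = ⊥
        · exact Or.inl hW
        right
        obtain ⟨wv, hwW, hw0⟩ := (Submodule.ne_bot_iff _).mp hW
        set N : Submodule ℂ U :=
          Submodule.span ℂ {x : U | ∃ a : A, ∃ v ∈ Wsub, R.ρ a v = x} with hNdef
        have hNM : N ≤ Submodule.span ℂ {x : U | ∃ (a : A) (u : U), R.ρ a u = x} := by
          apply Submodule.span_le.mpr
          rintro _ ⟨a, v, hv, rfl⟩
          exact Submodule.subset_span ⟨a, v, rfl⟩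
        have hNinv : ∀ a : A, ∀ x ∈ N, R.ρ a x ∈ N := by
          intro a x hx
          refine span_invariant R.ρ ?_ a hx
          rintro b _ ⟨c, v, hv, rfl⟩
          refine Submodule.subset_span ⟨b * c, v, hv, ?_⟩
          rw [R.mul_apply]; rfl
        have hNW : N ≤ Wsub := by
          apply Submodule.span_le.mpr
          rintro _ ⟨a, v, hv, rfl⟩
          exact hWinv a v hv
        have hNbot : N ≠ ⊥ := by
          intro hbot
          have hz : ∀ a : A, ∀ v ∈ Wsub, R.ρ a v = 0 := by
            intro a v hv
            have : R.ρ a v ∈ N := Submodule.subset_span ⟨a, v, hv, rfl⟩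
            rwa [hbot, Submodule.mem_bot] at this
          have horth : ∀ x ∈ Submodule.span ℂ {x : U | ∃ (a : A) (u : U), R.ρ a u = x},
              ⟪x, wv⟫ = 0 := by
            intro x hx
            induction hx using Submodule.span_induction with
            | mem y hy =>
              obtain ⟨a, u, rfl⟩ := hy
              rw [R.star_apply, hz (star a) wv hwW, inner_zero_right]
            | zero => exact inner_zero_left _
            | add y z _ _ ihy ihz => rw [inner_add_left, ihy, ihz, add_zero]
            | smul c y _ ihy => rw [inner_smul_left, ihy, mul_zero]
          have hC : IsClosed {x : U | ⟪x, wv⟫ = 0} :=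
            isClosed_eq (Continuous.inner continuous_id continuous_const) continuous_const
          have hwvC : wv ∈ {x : U | ⟪x, wv⟫ = 0} := by
            have hsub : (↑(Submodule.span ℂ {x : U | ∃ (a : A) (u : U), R.ρ a u = x}) : Set U)
                ⊆ {x : U | ⟪x, wv⟫ = 0} := fun x hx => horth x hx
            have := R.denseSmooth.closure_eq
            have : wv ∈ closure
                (↑(Submodule.span ℂ {x : U | ∃ (a : A) (u : U), R.ρ a u = x}) : Set U) := by
              rw [this]; trivial
            exact hC.closure_eq ▸ closure_mono hsub this
          exact hw0 (inner_self_eq_zero.mp hwvC)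
        rcases hMirr N hNM hNinv with h | h
        · exact absurd h hNbot
        · -- M = N ≤ W, M dense, W closed ⇒ W = ⊤
          have hMW : Submodule.span ℂ {x : U | ∃ (a : A) (u : U), R.ρ a u = x} ≤ Wsub :=
            h ▸ hNW
          have hdW : Dense (Wsub : Set U) := R.denseSmooth.mono hMW
          rw [Submodule.eq_top_iff']
          intro x
          have : x ∈ closure (Wsub : Set U) := hdW x
          rwa [hWclosed.closure_eq] at this
end

section
/- Let G be an ℓ-group and let V be a smooth, admissible, irreducible G-module over ℂ. Then every G-equivariant ℂ-linear endomorphism of V is a complex scalar multiple of the identity. -/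
/-- The subspace of vectors fixed by a subgroup `K` under a representation `ρ`. -/
def fixedSub {G : Type*} [Group G] {V : Type*} [AddCommGroup V] [Module ℂ V]
    (ρ : Representation ℂ G V) (K : Subgroup G) : Submodule ℂ V where
  carrier := {v : V | ∀ k ∈ K, ρ k v = v}
  add_mem' := by
    intro u v hu hv k hk
    simp only [Set.mem_setOf_eq] at hu hv ⊢
    simp [map_add, hu k hk, hv k hk]
  zero_mem' := by
    intro k hk
    simp
  smul_mem' := by
    intro c v hv k hk
    simp only [Set.mem_setOf_eq] at hv ⊢
    simp [map_smul, hv k hk]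

/-- **Schur's Lemma** for ℓ-groups: if `G` is a locally compact, Hausdorff, totally
disconnected topological group and `V` is a smooth, admissible, irreducible
`ℂ`-representation of `G`, then every `G`-equivariant linear endomorphism of `V` is a
scalar. -/
theorem ell_group_schur
    {G : Type*} [Group G] [TopologicalSpace G] [IsTopologicalGroup G]
    [LocallyCompactSpace G] [T2Space G] [TotallyDisconnectedSpace G]
    {V : Type*} [AddCommGroup V] [Module ℂ V]
    (ρ : Representation ℂ G V)
    (hsmooth : ∀ v : V, ∃ K : Subgroup G, IsCompact (K : Set G) ∧ IsOpen (K : Set G) ∧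
      v ∈ fixedSub ρ K)
    (hadm : ∀ K : Subgroup G, IsCompact (K : Set G) → IsOpen (K : Set G) →
      FiniteDimensional ℂ (fixedSub ρ K))
    (hne : ∃ v : V, v ≠ 0)
    (hirr : ∀ W : Submodule ℂ V, (∀ g : G, ∀ v ∈ W, ρ g v ∈ W) → W = ⊥ ∨ W = ⊤)
    (f : V →ₗ[ℂ] V) (hf : ∀ (g : G) (v : V), f (ρ g v) = ρ g (f v)) :
    ∃ c : ℂ, f = c • LinearMap.id := by
  obtain ⟨v, hv⟩ := hne
  obtain ⟨K, hKc, hKo, hvK⟩ := hsmooth v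
  set W := fixedSub ρ K with hW
  haveI : FiniteDimensional ℂ W := hadm K hKc hKo
  haveI : Nontrivial W := ⟨⟨v, hvK⟩, 0, by
    intro h
    exact hv (by simpa using congrArg Subtype.val h)⟩
  -- f maps W into W
  have hfW : ∀ w ∈ W, f w ∈ W := by
    intro w hw k hk
    rw [← hf k w, hw k hk]
  -- restriction of f to W
  let f' : W →ₗ[ℂ] W := f.restrict hfW
  obtain ⟨c, hc⟩ := Module.End.exists_eigenvalue f'
  obtain ⟨w, hw⟩ := hc.exists_hasEigenvector
  -- kernel of f - c • id is G-invariant and nonzero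
  set N := LinearMap.ker (f - c • LinearMap.id) with hN
  have hwN : (w : V) ∈ N := by
    have := hw.apply_eq_smul
    have h2 : f (w : V) = c • (w : V) := by
      have := congrArg Subtype.val this
      simpa [f', LinearMap.restrict_apply] using this
    simp [hN, LinearMap.mem_ker, h2, sub_eq_zero]
  have hNinv : ∀ g : G, ∀ u ∈ N, ρ g u ∈ N := by
    intro g u hu
    simp only [hN, LinearMap.mem_ker, LinearMap.sub_apply, LinearMap.smul_apply,
      LinearMap.id_apply] at hu ⊢
    rw [hf g u, ← map_smul, ← map_sub, hu, map_zero]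
  rcases hirr N hNinv with hbot | htop
  · exfalso
    have : (w : V) = 0 := by
      rw [hbot] at hwN; simpa using hwN
    exact hw.2 (Subtype.ext this)
  · refine ⟨c, ?_⟩
    ext u
    have hu : u ∈ N := htop ▸ Submodule.mem_top
    simp only [hN, LinearMap.mem_ker, LinearMap.sub_apply, LinearMap.smul_apply,
      LinearMap.id_apply, sub_eq_zero] at hu
    simpa using hu
end
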